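/- arXiv:2112.08212 — 3 statements merged into one kernel-verified Lean document; each statement's English description precedes it below -/
import Mathlib

section
/- The set D consisting of the five vectors (1, 0, 0), (−1/2, √3/2, 0), (−1/2, −√3/2, 0), (0, 0, 1), (0, 0, −1) in ℝ³ is a positive basis of unit vectors of ℝ³ of size 5 belonging to Ω, and cm(D) ≥ cm(D') for every positive basis D' of unit vectors of ℝ³ of size 5 belonging to Ω; that is, D is optimal over Ω. -/
noncomputable section

open Matrix
open scoped InnerProductSpace

/-- `ℝ^n` as a Euclidean space. -/
abbrev Euc (n : ℕ) := EuclideanSpace ℝ (Fin n)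

/-- The positive span of a set of vectors: all nonnegative linear combinations. -/
def pspan {n : ℕ} (S : Set (Euc n)) : Set (Euc n) :=
  {v | ∃ (t : Finset (Euc n)) (c : Euc n → ℝ),
      ↑t ⊆ S ∧ (∀ d ∈ t, 0 ≤ c d) ∧ v = ∑ d ∈ t, c d • d}

/-- A finite set is positively independent if no element lies in the positive span
of the others. -/
def PosIndep {n : ℕ} (S : Finset (Euc n)) : Prop :=
  ∀ d ∈ S, d ∉ pspan ((↑S : Set (Euc n)) \ {d})

/-- A positive basis of `ℝ^n`: a positively independent finite set of nonzero vectors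
whose positive span is `ℝ^n`. -/
def IsPosBasis {n : ℕ} (S : Finset (Euc n)) : Prop :=
  (∀ d ∈ S, d ≠ 0) ∧ PosIndep S ∧ pspan (↑S : Set (Euc n)) = Set.univ

/-- A positive basis of unit vectors of `ℝ^n`. -/
def IsUnitPosBasis {n : ℕ} (S : Finset (Euc n)) : Prop :=
  (∀ d ∈ S, ‖d‖ = 1) ∧ PosIndep S ∧ pspan (↑S : Set (Euc n)) = Set.univ

/-- The cosine measure of a finite set of nonzero vectors. -/
def cm {n : ℕ} (S : Finset (Euc n)) : ℝ :=
  sInf {r : ℝ | ∃ u : Euc n, ‖u‖ = 1 ∧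
    r = sSup ((fun d => ⟪u, d⟫_ℝ / ‖d‖) '' (↑S : Set (Euc n)))}

/-- The cosine vector set: unit vectors attaining the minimum defining `cm`. -/
def cV {n : ℕ} (S : Finset (Euc n)) : Set (Euc n) :=
  {u | ‖u‖ = 1 ∧ sSup ((fun d => ⟪u, d⟫_ℝ / ‖d‖) '' (↑S : Set (Euc n))) = cm S}

/-- The active set of vectors of `S` on `u`. -/
def activeSet {n : ℕ} (u : Euc n) (S : Finset (Euc n)) : Set (Euc n) :=
  {d | d ∈ S ∧ ⟪d, u⟫_ℝ = cm S}

/-- The all activity set. -/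
def allActivity {n : ℕ} (S : Finset (Euc n)) : Set (Euc n) :=
  ⋃ u ∈ cV S, activeSet u S

/-- A minimal positive basis of a subspace `L` of `ℝ^n`: a positively independent set of
`dim L + 1` unit vectors of `L` whose positive span is `L`. -/
def IsMinPosBasisOf {n : ℕ} (L : Submodule ℝ (Euc n)) (S : Finset (Euc n)) : Prop :=
  (∀ d ∈ S, ‖d‖ = 1) ∧ (↑S : Set (Euc n)) ⊆ (L : Set (Euc n)) ∧ PosIndep S ∧
    pspan (↑S : Set (Euc n)) = (L : Set (Euc n)) ∧ S.card = Module.finrank ℝ L + 1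

/-- `D` is partitioned into `s - n` minimal positive bases `P i` of subspaces `L i`
whose (internal) direct sum is `ℝ^n`. -/
def IsOmegaPartition {n s : ℕ} (D : Finset (Euc n))
    (L : Fin (s - n) → Submodule ℝ (Euc n)) (P : Fin (s - n) → Finset (Euc n)) : Prop :=
  (∀ i, 1 ≤ Module.finrank ℝ (L i)) ∧
  (∀ i, IsMinPosBasisOf (L i) (P i)) ∧
  (∀ i j, i ≠ j → Disjoint (↑(P i) : Set (Euc n)) (↑(P j) : Set (Euc n))) ∧
  ((↑D : Set (Euc n)) = ⋃ i, (↑(P i) : Set (Euc n))) ∧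
  DirectSum.IsInternal L

/-- Membership in the set `Ω` of positive bases of size `s`. -/
def MemOmega {n : ℕ} (s : ℕ) (D : Finset (Euc n)) : Prop :=
  ∃ (L : Fin (s - n) → Submodule ℝ (Euc n)) (P : Fin (s - n) → Finset (Euc n)),
    IsOmegaPartition D L P

/-- Membership in the set `Ω⁺`: an `Ω`-partition with pairwise orthogonal subspaces. -/
def MemOmegaPlus {n : ℕ} (s : ℕ) (D : Finset (Euc n)) : Prop :=
  ∃ (L : Fin (s - n) → Submodule ℝ (Euc n)) (P : Fin (s - n) → Finset (Euc n)),
    IsOmegaPartition D L P ∧ ∀ i j, i ≠ j → ∀ x ∈ L i, ∀ y ∈ L j, ⟪x, y⟫_ℝ = 0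

/-- Reinterpret a plain vector as an element of Euclidean space. -/
def toEuc {n : ℕ} (v : Fin n → ℝ) : Euc n := WithLp.toLp 2 v

/-- The `j`-th column of a matrix, as a vector of `ℝ^n`. -/
def col {n m : ℕ} (B : Matrix (Fin n) (Fin m) ℝ) (j : Fin m) : Euc n := toEuc fun i => B i j

/-- The Gram matrix `G(B) = Bᵀ B` of the columns of `B`. -/
def gram {n : ℕ} {ι : Type} [Fintype ι] (B : Matrix (Fin n) ι ℝ) : Matrix ι ι ℝ := Bᵀ * B

/-- The grand sum `1ᵀ G 1` of a square matrix. -/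
def grandSum {ι : Type} [Fintype ι] (G : Matrix ι ι ℝ) : ℝ :=
  (fun _ => (1 : ℝ)) ⬝ᵥ (G *ᵥ fun _ => (1 : ℝ))

/-!
Lower bound: for a unit `u = (x, y, z)`, either `|z| ≥ 1/√5` and a pole is close to `u`, or
`x² + y² ≥ 4/5` and some vertex of the triangle makes an angle at most `π/3` with `(x, y)`.

Upper bound: a basis of size `5` in `Ω` of `ℝ³` splits into a pair `{b, -b}` and a triangle
`d₁, d₂, d₃` positively spanning a plane `Π`. A positive dependency forces two of the `dᵢ` to be
at angle at least `2π/3`, and their bisector `w ∈ Π` has `⟪w, dᵢ⟫ ≤ 1/2` for all `i`. For a unit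
normal `ν` of `Π`, the vectors `u = s w + t ν` with `0 ≤ s ≤ 2/√5` have `⟪u, dᵢ⟫ ≤ s/2 ≤ 1/√5`,
and among them there is one with `|⟪u, b⟫| ≤ 1/√5`: either one orthogonal to `b`, or
`s = 2/√5`.
-/

section PositiveSpan

variable {n : ℕ}

lemma mem_pspan_finset_iff {S : Finset (Euc n)} {v : Euc n} :
    v ∈ pspan (S : Set (Euc n)) ↔ ∃ c : Euc n → ℝ, (∀ d ∈ S, 0 ≤ c d) ∧ v = ∑ d ∈ S, c d • d := by
  classical
  constructor
  · rintro ⟨t, c, hts, hc, rfl⟩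
    refine ⟨fun d => if d ∈ t then c d else 0, fun d _ => ?_, ?_⟩
    · dsimp only
      split_ifs with h
      exacts [hc d h, le_rfl]
    · simp only [ite_smul, zero_smul]
      rw [Finset.sum_ite_mem, Finset.inter_eq_right.mpr (Finset.coe_subset.mp hts)]
  · rintro ⟨c, hc, rfl⟩
    exact ⟨S, c, subset_rfl, hc, rfl⟩

lemma pspan_subset_span (S : Set (Euc n)) : pspan S ⊆ Submodule.span ℝ S := by
  rintro v ⟨t, c, hts, -, rfl⟩
  exact Submodule.sum_mem _ fun d hd => Submodule.smul_mem _ _ (Submodule.subset_span (hts hd))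

/-- Since `∑ d = 0`, adding `∑ |c e|` to every coefficient makes any linear combination of `S`
positive. -/
lemma pspan_eq_span_of_sum_eq_zero {S : Finset (Euc n)} (hS : ∑ d ∈ S, d = 0) :
    pspan (S : Set (Euc n)) = Submodule.span ℝ (S : Set (Euc n)) := by
  refine (pspan_subset_span _).antisymm fun v hv => ?_
  obtain ⟨c, -, hv⟩ := Submodule.mem_span_finset.mp hv
  refine mem_pspan_finset_iff.mpr ⟨fun d => c d + ∑ e ∈ S, |c e|, fun d hd => ?_, ?_⟩
  · have := Finset.single_le_sum (fun e _ => abs_nonneg (c e)) hd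
    linarith [neg_abs_le (c d)]
  · rw [← hv]
    simp only [add_smul, Finset.sum_add_distrib]
    rw [← Finset.smul_sum, hS, smul_zero, add_zero]

lemma exists_pos_dependency_of_neg_mem_pspan {S : Finset (Euc n)}
    (hS : ∀ d ∈ S, -d ∈ pspan (S : Set (Euc n))) :
    ∃ c : Euc n → ℝ, (∀ d ∈ S, 1 ≤ c d) ∧ ∑ d ∈ S, c d • d = 0 := by
  choose! c hc hneg using fun d hd => mem_pspan_finset_iff.mp (hS d hd)
  refine ⟨fun e => 1 + ∑ d ∈ S, c d e, fun e he =>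
    le_add_of_nonneg_right (Finset.sum_nonneg fun d hd => hc d hd e he), ?_⟩
  simp only [add_smul, one_smul, Finset.sum_add_distrib, Finset.sum_smul]
  rw [Finset.sum_comm, ← Finset.sum_congr rfl hneg, Finset.sum_neg_distrib, add_neg_cancel]

lemma posIndep_of_inner_nonpos {S : Finset (Euc n)} (h0 : ∀ d ∈ S, d ≠ 0)
    (h : ∀ d ∈ S, ∀ e ∈ S, d ≠ e → ⟪d, e⟫_ℝ ≤ 0) : PosIndep S := by
  rintro d hd ⟨t, c, hts, hc, hdt⟩
  have hnonpos : ⟪d, d⟫_ℝ ≤ 0 := by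
    nth_rw 2 [hdt]
    simp only [inner_sum, real_inner_smul_right]
    refine Finset.sum_nonpos fun e he => ?_
    obtain ⟨heS, hed⟩ := hts he
    exact mul_nonpos_of_nonneg_of_nonpos (hc e he) (h d hd e heS (Ne.symm hed))
  exact h0 d hd (real_inner_self_nonpos.mp hnonpos)

end PositiveSpan

section CosineMeasure

variable {n : ℕ}

lemma cm_le_of_forall_le {S : Finset (Euc n)} (hS : S.Nonempty) {u : Euc n} (hu : ‖u‖ = 1)
    {c : ℝ} (h : ∀ d ∈ S, ⟪u, d⟫_ℝ / ‖d‖ ≤ c) : cm S ≤ c := by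
  obtain ⟨d₀, hd₀⟩ := hS
  have hbdd : BddBelow {r : ℝ | ∃ u : Euc n, ‖u‖ = 1 ∧
      r = sSup ((fun d => ⟪u, d⟫_ℝ / ‖d‖) '' (S : Set (Euc n)))} := by
    refine ⟨-1, ?_⟩
    rintro r ⟨v, hv, rfl⟩
    have hle := le_csSup ((S.finite_toSet.image fun d => ⟪v, d⟫_ℝ / ‖d‖).bddAbove)
      ⟨d₀, hd₀, rfl⟩
    have := abs_le.mp (abs_real_inner_div_norm_mul_norm_le_one v d₀)
    rw [hv, one_mul] at this
    linarith [this.1]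
  refine (csInf_le hbdd ⟨u, hu, rfl⟩).trans (csSup_le ⟨_, d₀, hd₀, rfl⟩ ?_)
  rintro _ ⟨d, hd, rfl⟩
  exact h d hd

lemma le_cm_of_forall_exists [NeZero n] {S : Finset (Euc n)} {c : ℝ}
    (h : ∀ u : Euc n, ‖u‖ = 1 → ∃ d ∈ S, c ≤ ⟪u, d⟫_ℝ / ‖d‖) : c ≤ cm S := by
  refine le_csInf ⟨_, EuclideanSpace.single 0 1, by simp, rfl⟩ ?_
  rintro _ ⟨u, hu, rfl⟩
  obtain ⟨d, hd, hcd⟩ := h u hu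
  exact hcd.trans (le_csSup ((S.finite_toSet.image fun d => ⟪u, d⟫_ℝ / ‖d‖).bddAbove)
    ⟨d, hd, rfl⟩)

end CosineMeasure

section Blocks

open Module

variable {n : ℕ}

lemma finrank_span_add_one_le_card {S : Finset (Euc n)} (hne : S.Nonempty)
    (hS : ∑ d ∈ S, d = 0) : finrank ℝ (Submodule.span ℝ (S : Set (Euc n))) + 1 ≤ S.card := by
  classical
  obtain ⟨d, hd⟩ := hne
  have hdmem : d ∈ Submodule.span ℝ ((S.erase d : Finset (Euc n)) : Set (Euc n)) := by
    have : ∑ e ∈ S.erase d, e = -d :=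
      eq_neg_of_add_eq_zero_right ((Finset.add_sum_erase S (fun e => e) hd).trans hS)
    have hmem := neg_mem (Submodule.sum_mem
      (Submodule.span ℝ ((S.erase d : Finset (Euc n)) : Set (Euc n)))
      fun e he => Submodule.subset_span he)
    rwa [this, neg_neg] at hmem
  have hle : finrank ℝ (Submodule.span ℝ ((S.erase d : Finset (Euc n)) : Set (Euc n))) ≤
      (S.erase d).card :=
    finrank_span_finset_le_card _
  rw [← Finset.insert_erase hd, Finset.coe_insert, Submodule.span_insert_eq_span hdmem,
    Finset.card_insert_of_notMem (Finset.notMem_erase d S)]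
  omega

lemma isMinPosBasisOf_span {P : Finset (Euc n)} (hunit : ∀ d ∈ P, ‖d‖ = 1)
    (hinner : ∀ d ∈ P, ∀ e ∈ P, d ≠ e → ⟪d, e⟫_ℝ ≤ 0) (hsum : ∑ d ∈ P, d = 0)
    (hcard : P.card = finrank ℝ (Submodule.span ℝ (P : Set (Euc n))) + 1) :
    IsMinPosBasisOf (Submodule.span ℝ (P : Set (Euc n))) P :=
  ⟨hunit, Submodule.subset_span,
    posIndep_of_inner_nonpos (fun d hd => norm_ne_zero_iff.mp (by rw [hunit d hd]; norm_num))
      hinner,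
    pspan_eq_span_of_sum_eq_zero hsum, hcard⟩

lemma disjoint_of_disjoint_span {S T : Set (Euc n)}
    (h : Disjoint (Submodule.span ℝ S) (Submodule.span ℝ T)) (hS : (0 : Euc n) ∉ S) :
    Disjoint S T :=
  Set.disjoint_left.mpr fun d hdS hdT => hS <|
    (Submodule.disjoint_def.mp h) d (Submodule.subset_span hdS) (Submodule.subset_span hdT) ▸ hdS

end Blocks

section Planar

variable {E : Type*} [NormedAddCommGroup E] [InnerProductSpace ℝ E]

lemma inner_le_neg_half_of_pos_dependency {d₁ d₂ d₃ : E}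
    (h₁ : ‖d₁‖ = 1) (h₂ : ‖d₂‖ = 1) (h₃ : ‖d₃‖ = 1) {a b c : ℝ} (ha : 0 < a) (hb : 0 < b)
    (hc : 0 < c) (hsum : a • d₁ + b • d₂ + c • d₃ = 0) :
    ⟪d₁, d₂⟫_ℝ ≤ -(1 / 2) ∨ ⟪d₁, d₃⟫_ℝ ≤ -(1 / 2) ∨ ⟪d₂, d₃⟫_ℝ ≤ -(1 / 2) := by
  have hsq : ‖a • d₁ + b • d₂ + c • d₃‖ ^ 2 =
      a ^ 2 + b ^ 2 + c ^ 2 + 2 * a * b * ⟪d₁, d₂⟫_ℝ + 2 * a * c * ⟪d₁, d₃⟫_ℝ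
        + 2 * b * c * ⟪d₂, d₃⟫_ℝ := by
    rw [← real_inner_self_eq_norm_sq]
    simp only [inner_add_left, inner_add_right, real_inner_smul_left, real_inner_smul_right]
    simp only [real_inner_self_eq_norm_sq, h₁, h₂, h₃, real_inner_comm d₁ d₂,
      real_inner_comm d₁ d₃, real_inner_comm d₂ d₃]
    ring
  rw [hsum, norm_zero] at hsq
  by_contra! h
  -- otherwise `0 = ‖a d₁ + b d₂ + c d₃‖² > a² + b² + c² - ab - ac - bc ≥ 0`
  nlinarith [mul_pos (mul_pos ha hb) (by linarith : 0 < ⟪d₁, d₂⟫_ℝ + 1 / 2),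
    mul_pos (mul_pos ha hc) (by linarith : 0 < ⟪d₁, d₃⟫_ℝ + 1 / 2),
    mul_pos (mul_pos hb hc) (by linarith : 0 < ⟪d₂, d₃⟫_ℝ + 1 / 2),
    sq_nonneg (a - b), sq_nonneg (a - c), sq_nonneg (b - c)]

lemma add_ne_zero_of_pos_dependency {d₁ d₂ d₃ : E} (h₁ : ‖d₁‖ = 1) (h₃ : ‖d₃‖ = 1)
    (h₃₁ : d₃ ≠ d₁) (h₃₂ : d₃ ≠ d₂) {a b c : ℝ} (hc : 0 < c)
    (hsum : a • d₁ + b • d₂ + c • d₃ = 0) : d₁ + d₂ ≠ 0 := by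
  intro h
  have hd₂ : d₂ = -d₁ := eq_neg_of_add_eq_zero_right h
  have hd₃ : d₃ = ((b - a) / c) • d₁ := by
    rw [hd₂] at hsum
    rw [div_eq_inv_mul, mul_smul, sub_smul, eq_inv_smul_iff₀ hc.ne']
    linear_combination (norm := module) hsum
  have habs : |(b - a) / c| = 1 := by
    simpa [h₁, h₃, norm_smul, abs_div] using (congrArg norm hd₃).symm
  rcases abs_eq zero_le_one |>.mp habs with h1 | h1
  · exact h₃₁ (by rw [hd₃, h1, one_smul])
  · exact h₃₂ (by rw [hd₃, h1, hd₂, neg_one_smul])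

lemma exists_unit_inner_le_half_of_inner_le_neg_half {L : Submodule ℝ E} {d₁ d₂ d₃ : E}
    (hd₁ : d₁ ∈ L) (hd₂ : d₂ ∈ L) (h₁ : ‖d₁‖ = 1) (h₂ : ‖d₂‖ = 1) (h₃ : ‖d₃‖ = 1)
    (h₃₁ : d₃ ≠ d₁) (h₃₂ : d₃ ≠ d₂) {a b c : ℝ} (ha : 0 < a) (hb : 0 < b) (hc : 0 < c)
    (hsum : a • d₁ + b • d₂ + c • d₃ = 0) (h₁₂ : ⟪d₁, d₂⟫_ℝ ≤ -(1 / 2)) :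
    ∃ w ∈ L, ‖w‖ = 1 ∧ ⟪w, d₁⟫_ℝ ≤ 1 / 2 ∧ ⟪w, d₂⟫_ℝ ≤ 1 / 2 ∧ ⟪w, d₃⟫_ℝ ≤ 1 / 2 := by
  have hp : 0 < ‖d₁ + d₂‖ :=
    norm_pos_iff.mpr (add_ne_zero_of_pos_dependency h₁ h₃ h₃₁ h₃₂ hc hsum)
  have hpsq : ‖d₁ + d₂‖ ^ 2 = 2 + 2 * ⟪d₁, d₂⟫_ℝ := by
    rw [norm_add_sq_real, h₁, h₂]; ring
  have hi₁ : ⟪d₁ + d₂, d₁⟫_ℝ = ‖d₁ + d₂‖ ^ 2 / 2 := by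
    rw [hpsq, inner_add_left, real_inner_self_eq_norm_sq, h₁, real_inner_comm]; ring
  have hi₂ : ⟪d₁ + d₂, d₂⟫_ℝ = ‖d₁ + d₂‖ ^ 2 / 2 := by
    rw [hpsq, inner_add_left, real_inner_self_eq_norm_sq, h₂]; ring
  have hi₃ : c * ⟪d₁ + d₂, d₃⟫_ℝ = -(a + b) * (‖d₁ + d₂‖ ^ 2 / 2) := by
    have := congrArg (fun v => ⟪d₁ + d₂, v⟫_ℝ) hsum
    simp only [inner_add_right, real_inner_smul_right, inner_zero_right, hi₁, hi₂] at this
    linear_combination this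
  have hsmall : ‖d₁ + d₂‖ ≤ 1 := by nlinarith
  refine ⟨‖d₁ + d₂‖⁻¹ • (d₁ + d₂), L.smul_mem _ (L.add_mem hd₁ hd₂), ?_, ?_, ?_, ?_⟩
  · rw [norm_smul, norm_inv, norm_norm, inv_mul_cancel₀ hp.ne']
  all_goals rw [real_inner_smul_left]
  · rw [hi₁]; field_simp; nlinarith
  · rw [hi₂]; field_simp; nlinarith
  · have : ⟪d₁ + d₂, d₃⟫_ℝ ≤ 0 := by nlinarith [sq_nonneg ‖d₁ + d₂‖]
    nlinarith [inv_pos.mpr hp]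

lemma exists_unit_inner_le_half_of_pos_dependency {L : Submodule ℝ E} {d₁ d₂ d₃ : E}
    (hd₁ : d₁ ∈ L) (hd₂ : d₂ ∈ L) (hd₃ : d₃ ∈ L) (h₁ : ‖d₁‖ = 1) (h₂ : ‖d₂‖ = 1) (h₃ : ‖d₃‖ = 1)
    (h₁₂ : d₁ ≠ d₂) (h₁₃ : d₁ ≠ d₃) (h₂₃ : d₂ ≠ d₃) {a b c : ℝ} (ha : 0 < a) (hb : 0 < b)
    (hc : 0 < c) (hsum : a • d₁ + b • d₂ + c • d₃ = 0) :
    ∃ w ∈ L, ‖w‖ = 1 ∧ ⟪w, d₁⟫_ℝ ≤ 1 / 2 ∧ ⟪w, d₂⟫_ℝ ≤ 1 / 2 ∧ ⟪w, d₃⟫_ℝ ≤ 1 / 2 := by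
  rcases inner_le_neg_half_of_pos_dependency h₁ h₂ h₃ ha hb hc hsum with h | h | h
  · exact exists_unit_inner_le_half_of_inner_le_neg_half hd₁ hd₂ h₁ h₂ h₃ h₁₃.symm h₂₃.symm
      ha hb hc hsum h
  · obtain ⟨w, hw, hwn, w₁, w₃, w₂⟩ := exists_unit_inner_le_half_of_inner_le_neg_half hd₁ hd₃
      h₁ h₃ h₂ h₁₂.symm h₂₃ ha hc hb (by rw [← hsum]; abel) h
    exact ⟨w, hw, hwn, w₁, w₂, w₃⟩
  · obtain ⟨w, hw, hwn, w₂, w₃, w₁⟩ := exists_unit_inner_le_half_of_inner_le_neg_half hd₂ hd₃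
      h₂ h₃ h₁ h₁₂ h₁₃ hb hc ha (by rw [← hsum]; abel) h
    exact ⟨w, hw, hwn, w₁, w₂, w₃⟩

end Planar

lemma abs_le_one_div_sqrt_five {x : ℝ} (h : 5 * x ^ 2 ≤ 1) : |x| ≤ 1 / √5 := by
  rw [one_div, ← Real.sqrt_inv]
  exact Real.abs_le_sqrt (by linarith)

/-- Either some `(s, t) ⊥ (β, ν)` is admissible, or `2β < ν` and `(s, t) = (2, -1) / √5`
works. -/
lemma exists_sq_add_sq_eq_one_and_sq_le_of_nonneg {β ν : ℝ} (hβ : 0 ≤ β) (hν : 0 ≤ ν)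
    (h : β ^ 2 + ν ^ 2 ≤ 1) :
    ∃ s t : ℝ, 0 ≤ s ∧ 5 * s ^ 2 ≤ 4 ∧ s ^ 2 + t ^ 2 = 1 ∧ 5 * (s * β + t * ν) ^ 2 ≤ 1 := by
  rcases eq_or_lt_of_le hν with rfl | hν
  · exact ⟨0, 1, le_rfl, by norm_num, by norm_num, by norm_num⟩
  by_cases hνβ : ν ≤ 2 * β
  · have hr : 0 < √(β ^ 2 + ν ^ 2) := Real.sqrt_pos.mpr (by positivity)
    have hr2 := Real.sq_sqrt (by positivity : 0 ≤ β ^ 2 + ν ^ 2)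
    refine ⟨ν / √(β ^ 2 + ν ^ 2), -β / √(β ^ 2 + ν ^ 2), by positivity, ?_, ?_, ?_⟩
    · rw [div_pow, hr2, mul_div_assoc', div_le_iff₀ (by positivity)]
      nlinarith
    · rw [div_pow, div_pow, neg_sq, ← add_div, add_comm, hr2, div_self (by positivity)]
    · field_simp
      norm_num
  · have h5 : √5 ^ 2 = 5 := Real.sq_sqrt (by norm_num)
    refine ⟨2 / √5, -(1 / √5), by positivity, ?_, ?_, ?_⟩
    · rw [div_pow, h5]; norm_num
    · rw [neg_sq, div_pow, div_pow, h5]; norm_num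
    · have : 5 * (2 / √5 * β + -(1 / √5) * ν) ^ 2 = (2 * β - ν) ^ 2 := by
        field_simp
        rw [h5]
        ring
      rw [this]
      nlinarith

lemma exists_sq_add_sq_eq_one_and_sq_le {β ν : ℝ} (h : β ^ 2 + ν ^ 2 ≤ 1) :
    ∃ s t : ℝ, 0 ≤ s ∧ 5 * s ^ 2 ≤ 4 ∧ s ^ 2 + t ^ 2 = 1 ∧ 5 * (s * β + t * ν) ^ 2 ≤ 1 := by
  obtain ⟨s, t, hs, hs4, hst, hv⟩ :=
    exists_sq_add_sq_eq_one_and_sq_le_of_nonneg (abs_nonneg β) (abs_nonneg ν)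
      (by simpa only [sq_abs])
  rcases le_total 0 β with hβ | hβ <;> rcases le_total 0 ν with hν | hν
  · exact ⟨s, t, hs, hs4, hst, by simpa only [abs_of_nonneg, hβ, hν] using hv⟩
  · refine ⟨s, -t, hs, hs4, by rwa [neg_sq], ?_⟩
    rw [abs_of_nonneg hβ, abs_of_nonpos hν] at hv
    linear_combination hv
  · refine ⟨s, -t, hs, hs4, by rwa [neg_sq], ?_⟩
    rw [abs_of_nonpos hβ, abs_of_nonneg hν] at hv
    linear_combination hv
  · refine ⟨s, t, hs, hs4, hst, ?_⟩
    rw [abs_of_nonpos hβ, abs_of_nonpos hν] at hv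
    linear_combination hv

section OutOfPlane

variable {E : Type*} [NormedAddCommGroup E] [InnerProductSpace ℝ E]

lemma exists_unit_inner_le_one_div_sqrt_five {w n b : E} (hw : ‖w‖ = 1) (hn : ‖n‖ = 1)
    (hwn : ⟪w, n⟫_ℝ = 0) (hb : ‖b‖ = 1) :
    ∃ u : E, ‖u‖ = 1 ∧ |⟪u, b⟫_ℝ| ≤ 1 / √5 ∧
      ∀ d, ⟪n, d⟫_ℝ = 0 → ⟪w, d⟫_ℝ ≤ 1 / 2 → ⟪u, d⟫_ℝ ≤ 1 / √5 := by
  have hbessel : ⟪w, b⟫_ℝ ^ 2 + ⟪n, b⟫_ℝ ^ 2 ≤ 1 := by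
    have := real_inner_self_nonneg (x := b - ⟪w, b⟫_ℝ • w - ⟪n, b⟫_ℝ • n)
    simp only [inner_sub_left, inner_sub_right, real_inner_smul_left, real_inner_smul_right]
      at this
    simp only [real_inner_self_eq_norm_sq, hw, hn, hb, real_inner_comm w n, hwn,
      real_inner_comm w b, real_inner_comm n b] at this
    nlinarith
  obtain ⟨s, t, hs, hs4, hst, hv⟩ := exists_sq_add_sq_eq_one_and_sq_le hbessel
  refine ⟨s • w + t • n, ?_, ?_, fun d hnd hwd => ?_⟩
  · rw [← pow_eq_one_iff_of_nonneg (norm_nonneg _) two_ne_zero, ← real_inner_self_eq_norm_sq]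
    simp only [inner_add_left, inner_add_right, real_inner_smul_left, real_inner_smul_right]
    simp only [real_inner_self_eq_norm_sq, hw, hn, real_inner_comm w n, hwn]
    linear_combination hst
  · rw [inner_add_left, real_inner_smul_left, real_inner_smul_left]
    exact abs_le_one_div_sqrt_five hv
  · rw [inner_add_left, real_inner_smul_left, real_inner_smul_left, hnd, mul_zero, add_zero]
    calc s * ⟪w, d⟫_ℝ ≤ s / 2 := by nlinarith
      _ ≤ 1 / √5 := (le_abs_self _).trans (abs_le_one_div_sqrt_five (by linarith))

end OutOfPlane

section Upper

open Module

lemma eq_or_eq_neg_of_finrank_eq_one {E : Type*} [NormedAddCommGroup E] [InnerProductSpace ℝ E]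
    {L : Submodule ℝ E} (hL : finrank ℝ L = 1) {b d : E} (hb : b ∈ L) (hd : d ∈ L)
    (hb₁ : ‖b‖ = 1) (hd₁ : ‖d‖ = 1) : d = b ∨ d = -b := by
  have hb₀ : b ≠ 0 := norm_ne_zero_iff.mp (by rw [hb₁]; exact one_ne_zero)
  have : FiniteDimensional ℝ L := .of_finrank_eq_succ hL
  have hspan : Submodule.span ℝ {b} = L :=
    Submodule.eq_of_le_of_finrank_eq ((Submodule.span_singleton_le_iff_mem _ _).mpr hb)
      (by rw [finrank_span_singleton hb₀, hL])
  obtain ⟨r, rfl⟩ := Submodule.mem_span_singleton.mp (hspan ▸ hd)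
  rw [norm_smul, hb₁, mul_one, Real.norm_eq_abs] at hd₁
  rcases abs_eq zero_le_one |>.mp hd₁ with rfl | rfl
  exacts [.inl (one_smul _ _), .inr (neg_one_smul _ _)]

lemma exists_unit_mem_orthogonal {E : Type*} [NormedAddCommGroup E] [InnerProductSpace ℝ E]
    [FiniteDimensional ℝ E] {L : Submodule ℝ E} (hL : finrank ℝ L < finrank ℝ E) :
    ∃ ν ∈ Lᗮ, ‖ν‖ = 1 := by
  have hne : Lᗮ ≠ ⊥ := by
    intro h
    rw [Submodule.orthogonal_eq_bot_iff] at h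
    rw [h, finrank_top] at hL
    exact hL.false
  obtain ⟨v, hv, hv₀⟩ := Submodule.exists_mem_ne_zero_of_ne_bot hne
  exact ⟨‖v‖⁻¹ • v, Lᗮ.smul_mem _ hv, norm_smul_inv_norm hv₀⟩

variable {n : ℕ}

lemma IsMinPosBasisOf.exists_pos_dependency {L : Submodule ℝ (Euc n)} {P : Finset (Euc n)}
    (hP : IsMinPosBasisOf L P) : ∃ c : Euc n → ℝ, (∀ d ∈ P, 1 ≤ c d) ∧ ∑ d ∈ P, c d • d = 0 :=
  exists_pos_dependency_of_neg_mem_pspan fun d hd => by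
    rw [hP.2.2.2.1]
    exact L.neg_mem (hP.2.1 hd)

lemma IsMinPosBasisOf.eq_or_eq_neg {L : Submodule ℝ (Euc n)} {P : Finset (Euc n)}
    (hP : IsMinPosBasisOf L P) (hL : finrank ℝ L = 1) {b d : Euc n} (hb : b ∈ P) (hd : d ∈ P) :
    d = b ∨ d = -b :=
  eq_or_eq_neg_of_finrank_eq_one hL (hP.2.1 hb) (hP.2.1 hd) (hP.1 b hb) (hP.1 d hd)

lemma IsMinPosBasisOf.exists_unit_inner_le_half {L : Submodule ℝ (Euc n)} {P : Finset (Euc n)}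
    (hP : IsMinPosBasisOf L P) (hL : finrank ℝ L = 2) :
    ∃ w ∈ L, ‖w‖ = 1 ∧ ∀ d ∈ P, ⟪w, d⟫_ℝ ≤ 1 / 2 := by
  classical
  obtain ⟨c, hc, hsum⟩ := hP.exists_pos_dependency
  obtain ⟨hu, hPL, -, -, hcard⟩ := hP
  rw [hL] at hcard
  obtain ⟨d₁, d₂, d₃, h₁₂, h₁₃, h₂₃, rfl⟩ := Finset.card_eq_three.mp hcard
  rw [Finset.sum_insert (by simp [h₁₂, h₁₃]), Finset.sum_insert (by simp [h₂₃]),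
    Finset.sum_singleton, ← add_assoc] at hsum
  simp only [Finset.mem_insert, Finset.mem_singleton, forall_eq_or_imp, forall_eq] at hc hu ⊢
  obtain ⟨w, hwL, hw, hw₁, hw₂, hw₃⟩ := exists_unit_inner_le_half_of_pos_dependency
    (hPL (by simp)) (hPL (by simp)) (hPL (by simp)) hu.1 hu.2.1 hu.2.2 h₁₂ h₁₃ h₂₃
    (zero_lt_one.trans_le hc.1) (zero_lt_one.trans_le hc.2.1) (zero_lt_one.trans_le hc.2.2) hsum
  exact ⟨w, hwL, hw, hw₁, hw₂, hw₃⟩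

lemma exists_unit_inner_le_of_isMinPosBasisOf (hn : 2 < n) {Lp Lq : Submodule ℝ (Euc n)}
    {Pp Pq : Finset (Euc n)} (hp : IsMinPosBasisOf Lp Pp) (hq : IsMinPosBasisOf Lq Pq)
    (hLp : finrank ℝ Lp = 1) (hLq : finrank ℝ Lq = 2) :
    ∃ u : Euc n, ‖u‖ = 1 ∧ ∀ d ∈ Pp ∪ Pq, ⟪u, d⟫_ℝ ≤ 1 / √5 := by
  obtain ⟨w, hwL, hw, hwP⟩ := hq.exists_unit_inner_le_half hLq
  obtain ⟨ν, hνL, hν⟩ := exists_unit_mem_orthogonal (L := Lq) (by simp [hLq, hn])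
  obtain ⟨b, hb⟩ := Finset.card_pos.mp (by rw [hp.2.2.2.2, hLp]; norm_num : 0 < Pp.card)
  obtain ⟨u, hu, hub, hud⟩ := exists_unit_inner_le_one_div_sqrt_five hw hν
    (Submodule.inner_right_of_mem_orthogonal hwL hνL) (hp.1 b hb)
  refine ⟨u, hu, fun d hd => ?_⟩
  rcases Finset.mem_union.mp hd with hd | hd
  · rcases hp.eq_or_eq_neg hLp hb hd with rfl | rfl
    · exact (le_abs_self _).trans hub
    · rw [inner_neg_right]
      exact (neg_le_abs _).trans hub
  · exact hud d (Submodule.inner_left_of_mem_orthogonal (hq.2.1 hd) hνL) (hwP d hd)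

lemma exists_blocks_of_memOmega {D : Finset (Euc 3)} (hcard : D.card = 5) (hD : MemOmega 5 D) :
    ∃ (Lp Lq : Submodule ℝ (Euc 3)) (Pp Pq : Finset (Euc 3)), IsMinPosBasisOf Lp Pp ∧
      IsMinPosBasisOf Lq Pq ∧ finrank ℝ Lp = 1 ∧ finrank ℝ Lq = 2 ∧ D = Pp ∪ Pq := by
  classical
  obtain ⟨L, P, hrank, hmin, hdisj, hunion, -⟩ := hD
  have hDP : D = P 0 ∪ P 1 := by
    apply Finset.coe_injective
    rw [Finset.coe_union, hunion]
    ext x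
    simp [Fin.exists_fin_two]
  have hcards : (P 0).card + (P 1).card = 5 := by
    rw [← Finset.card_union_of_disjoint (Finset.disjoint_coe.mp (hdisj 0 1 (by decide))), ← hDP,
      hcard]
  have h₀ := (hmin 0).2.2.2.2
  have h₁ := (hmin 1).2.2.2.2
  have r₀ := hrank 0
  have r₁ := hrank 1
  by_cases h : finrank ℝ (L 0) = 1
  · exact ⟨L 0, L 1, P 0, P 1, hmin 0, hmin 1, h, by omega, hDP⟩
  · exact ⟨L 1, L 0, P 1, P 0, hmin 1, hmin 0, by omega, by omega,
      hDP.trans (Finset.union_comm _ _)⟩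

lemma cm_le_one_div_sqrt_five {D : Finset (Euc 3)} (hunit : ∀ d ∈ D, ‖d‖ = 1)
    (hcard : D.card = 5) (hD : MemOmega 5 D) : cm D ≤ 1 / √5 := by
  obtain ⟨Lp, Lq, Pp, Pq, hp, hq, hLp, hLq, rfl⟩ := exists_blocks_of_memOmega hcard hD
  obtain ⟨u, hu, hud⟩ := exists_unit_inner_le_of_isMinPosBasisOf (by norm_num) hp hq hLp hLq
  refine cm_le_of_forall_le (Finset.card_pos.mp (by omega)) hu fun d hd => ?_
  rw [hunit d hd, div_one]
  exact hud d hd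

end Upper

section Bipyramid

open Module

def bipyramid : Fin 5 → Euc 3 :=
  ![toEuc ![1, 0, 0], toEuc ![-(1/2), Real.sqrt 3 / 2, 0], toEuc ![-(1/2), -(Real.sqrt 3 / 2), 0],
    toEuc ![0, 0, 1], toEuc ![0, 0, -1]]

lemma inner_toEuc (u : Euc 3) (a b c : ℝ) :
    ⟪u, toEuc ![a, b, c]⟫_ℝ = u 0 * a + u 1 * b + u 2 * c := by
  simp [toEuc, PiLp.inner_apply, Fin.sum_univ_three, mul_comm]

lemma toEuc_apply (a b c : ℝ) (i : Fin 3) : toEuc ![a, b, c] i = ![a, b, c] i := rfl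

lemma inner_bipyramid_self (i : Fin 5) : ⟪bipyramid i, bipyramid i⟫_ℝ = 1 := by
  have h3 := Real.sq_sqrt (show (0 : ℝ) ≤ 3 by norm_num)
  fin_cases i <;>
    simp only [bipyramid, Fin.reduceFinMk, Matrix.cons_val, inner_toEuc, toEuc_apply] <;>
    nlinarith

lemma inner_bipyramid_nonpos {i j : Fin 5} (hij : i ≠ j) :
    ⟪bipyramid i, bipyramid j⟫_ℝ ≤ 0 := by
  have h3 := Real.sq_sqrt (show (0 : ℝ) ≤ 3 by norm_num)
  fin_cases i <;> fin_cases j <;>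
    simp only [bipyramid, Fin.reduceFinMk, Matrix.cons_val, inner_toEuc, toEuc_apply] <;>
    first | exact absurd rfl hij | nlinarith

lemma norm_bipyramid (i : Fin 5) : ‖bipyramid i‖ = 1 := by
  have := inner_bipyramid_self i
  rw [real_inner_self_eq_norm_sq, pow_eq_one_iff_of_nonneg (norm_nonneg _) two_ne_zero] at this
  exact this

lemma bipyramid_injective : Function.Injective bipyramid := by
  intro i j hij
  by_contra hne
  have := inner_bipyramid_nonpos hne
  rw [← hij, inner_bipyramid_self] at this
  norm_num at this

lemma bipyramid_triangle_sum : bipyramid 0 + bipyramid 1 + bipyramid 2 = 0 := by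
  ext i; fin_cases i <;> simp [bipyramid, toEuc]
  ring

lemma bipyramid_poles_sum : bipyramid 3 + bipyramid 4 = 0 := by
  ext i; fin_cases i <;> simp [bipyramid, toEuc]

lemma span_bipyramid : Submodule.span ℝ (Set.range bipyramid) = ⊤ := by
  refine Submodule.eq_top_iff'.mpr fun v => ?_
  have hv : v = v 0 • bipyramid 0 + (v 1 / √3) • (bipyramid 1 - bipyramid 2)
      + v 2 • bipyramid 3 := by
    ext i; fin_cases i <;> simp [bipyramid, toEuc]
  rw [hv]
  have hmem : ∀ i, bipyramid i ∈ Submodule.span ℝ (Set.range bipyramid) :=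
    fun i => Submodule.subset_span (Set.mem_range_self i)
  exact add_mem (add_mem (Submodule.smul_mem _ _ (hmem 0))
    (Submodule.smul_mem _ _ (sub_mem (hmem 1) (hmem 2)))) (Submodule.smul_mem _ _ (hmem 3))

lemma exists_one_div_sqrt_five_le_inner_bipyramid {u : Euc 3} (hu : ‖u‖ = 1) :
    ∃ i, 1 / √5 ≤ ⟪u, bipyramid i⟫_ℝ := by
  have hsum : u 0 ^ 2 + u 1 ^ 2 + u 2 ^ 2 = 1 := by
    have := EuclideanSpace.real_norm_sq_eq u
    rw [hu, one_pow, Fin.sum_univ_three] at this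
    exact this.symm
  set a := 1 / √5 with ha
  have ha₀ : 0 < a := by positivity
  have ha₂ : a ^ 2 = 1 / 5 := by rw [ha, div_pow, Real.sq_sqrt (by norm_num)]; norm_num
  have h3 := Real.sq_sqrt (show (0 : ℝ) ≤ 3 by norm_num)
  by_contra! h
  have h₀ := h 0
  have h₁ := h 1
  have h₂ := h 2
  have h₃ := h 3
  have h₄ := h 4
  simp only [bipyramid, inner_toEuc, Matrix.cons_val] at h₀ h₁ h₂ h₃ h₄
  -- if the three triangle values are all below `a`, then `x² + y² < 4 a² = 4/5`
  nlinarith [mul_pos (by linarith : 0 < 2 * a + u 0 - √3 * u 1)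
    (by linarith : 0 < 2 * a + u 0 + √3 * u 1), mul_pos (by linarith : 0 < u 0 + 2 * a)
    (by linarith : 0 < a - u 0)]

def bipyramidEmb : Fin 5 ↪ Euc 3 := ⟨bipyramid, bipyramid_injective⟩

lemma coe_map_bipyramidEmb_univ :
    ((Finset.univ.map bipyramidEmb : Finset (Euc 3)) : Set (Euc 3)) =
      {toEuc ![1, 0, 0], toEuc ![-(1/2), Real.sqrt 3 / 2, 0],
        toEuc ![-(1/2), -(Real.sqrt 3 / 2), 0], toEuc ![0, 0, 1], toEuc ![0, 0, -1]} := by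
  ext x
  simp only [Finset.coe_map, Finset.coe_univ, Set.image_univ, Set.mem_range, Set.mem_insert_iff,
    Set.mem_singleton_iff, bipyramidEmb, Function.Embedding.coeFn_mk, Fin.exists_fin_succ,
    bipyramid]
  simp only [eq_comm (b := x)]
  simp

lemma norm_of_mem_map_bipyramidEmb {s : Finset (Fin 5)} :
    ∀ d ∈ s.map bipyramidEmb, ‖d‖ = 1 :=
  Finset.forall_mem_map.mpr fun i _ => norm_bipyramid i

lemma inner_nonpos_of_mem_map_bipyramidEmb {s : Finset (Fin 5)} :
    ∀ d ∈ s.map bipyramidEmb, ∀ e ∈ s.map bipyramidEmb, d ≠ e → ⟪d, e⟫_ℝ ≤ 0 :=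
  Finset.forall_mem_map.mpr fun _ _ => Finset.forall_mem_map.mpr fun _ _ hij =>
    inner_bipyramid_nonpos fun h => hij (congrArg bipyramidEmb h)

lemma isUnitPosBasis_bipyramid : IsUnitPosBasis (Finset.univ.map bipyramidEmb) := by
  refine ⟨norm_of_mem_map_bipyramidEmb, posIndep_of_inner_nonpos (fun d hd h => ?_)
    inner_nonpos_of_mem_map_bipyramidEmb, ?_⟩
  · simpa [h] using norm_of_mem_map_bipyramidEmb d hd
  · rw [pspan_eq_span_of_sum_eq_zero]
    · simp [bipyramidEmb, span_bipyramid]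
    · rw [Finset.sum_map]
      change ∑ i, bipyramid i = 0
      rw [Fin.sum_univ_five, bipyramid_triangle_sum, zero_add, bipyramid_poles_sum]

def bipyramidTriangle : Finset (Euc 3) := ({0, 1, 2} : Finset (Fin 5)).map bipyramidEmb

def bipyramidPoles : Finset (Euc 3) := ({3, 4} : Finset (Fin 5)).map bipyramidEmb

lemma map_bipyramidEmb_univ :
    Finset.univ.map bipyramidEmb = bipyramidTriangle ∪ bipyramidPoles := by
  rw [bipyramidTriangle, bipyramidPoles, ← Finset.map_union]
  rfl

lemma sum_bipyramidTriangle : ∑ d ∈ bipyramidTriangle, d = 0 := by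
  rw [bipyramidTriangle, Finset.sum_map, Finset.sum_insert (by decide),
    Finset.sum_insert (by decide), Finset.sum_singleton, ← add_assoc]
  exact bipyramid_triangle_sum

lemma sum_bipyramidPoles : ∑ d ∈ bipyramidPoles, d = 0 := by
  rw [bipyramidPoles, Finset.sum_map, Finset.sum_insert (by decide), Finset.sum_singleton]
  exact bipyramid_poles_sum

lemma bipyramid_blocks :
    finrank ℝ (Submodule.span ℝ (bipyramidTriangle : Set (Euc 3))) = 2 ∧
      finrank ℝ (Submodule.span ℝ (bipyramidPoles : Set (Euc 3))) = 1 ∧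
      IsCompl (Submodule.span ℝ (bipyramidTriangle : Set (Euc 3)))
        (Submodule.span ℝ (bipyramidPoles : Set (Euc 3))) := by
  have hcardT : bipyramidTriangle.card = 3 := rfl
  have hcardQ : bipyramidPoles.card = 2 := rfl
  have hT := finrank_span_add_one_le_card (Finset.card_pos.mp (by omega)) sum_bipyramidTriangle
  have hQ := finrank_span_add_one_le_card (Finset.card_pos.mp (by omega)) sum_bipyramidPoles
  have hsup : Submodule.span ℝ (bipyramidTriangle : Set (Euc 3)) ⊔
      Submodule.span ℝ (bipyramidPoles : Set (Euc 3)) = ⊤ := by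
    rw [← Submodule.span_union, ← Finset.coe_union, ← map_bipyramidEmb_univ]
    simpa [bipyramidEmb] using span_bipyramid
  have hdim := Submodule.finrank_sup_add_finrank_inf_eq
    (Submodule.span ℝ (bipyramidTriangle : Set (Euc 3)))
    (Submodule.span ℝ (bipyramidPoles : Set (Euc 3)))
  rw [hsup, finrank_top, finrank_euclideanSpace_fin] at hdim
  exact ⟨by omega, by omega, disjoint_iff.mpr (Submodule.finrank_eq_zero.mp (by omega)),
    codisjoint_iff.mpr hsup⟩

lemma memOmega_bipyramid : MemOmega 5 (Finset.univ.map bipyramidEmb) := by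
  obtain ⟨hT, hQ, hcompl⟩ := bipyramid_blocks
  have hzero : ∀ {s : Finset (Fin 5)}, (0 : Euc 3) ∉ ((s.map bipyramidEmb : Finset _) : Set _) :=
    fun h => by simpa using norm_of_mem_map_bipyramidEmb _ h
  refine ⟨![Submodule.span ℝ bipyramidTriangle, Submodule.span ℝ bipyramidPoles],
    ![bipyramidTriangle, bipyramidPoles], ?_, ?_, ?_, ?_, ?_⟩
  · intro i; fin_cases i
    exacts [hT.symm ▸ one_le_two, hQ.ge]
  · intro i; fin_cases i
    · exact isMinPosBasisOf_span norm_of_mem_map_bipyramidEmb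
        inner_nonpos_of_mem_map_bipyramidEmb sum_bipyramidTriangle (by rw [hT]; rfl)
    · exact isMinPosBasisOf_span norm_of_mem_map_bipyramidEmb
        inner_nonpos_of_mem_map_bipyramidEmb sum_bipyramidPoles (by rw [hQ]; rfl)
  · intro i j hij
    fin_cases i <;> fin_cases j
    all_goals first
      | exact absurd rfl hij
      | exact disjoint_of_disjoint_span hcompl.disjoint hzero
      | exact (disjoint_of_disjoint_span hcompl.disjoint hzero).symm
  · ext x
    simp [map_bipyramidEmb_univ, Fin.exists_fin_two]
  · exact (DirectSum.isInternal_submodule_iff_isCompl _ (by decide : (0 : Fin (5 - 3)) ≠ 1)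
      (by ext i; fin_cases i <;> simp)).mpr hcompl

lemma one_div_sqrt_five_le_cm_bipyramid : 1 / √5 ≤ cm (Finset.univ.map bipyramidEmb) :=
  le_cm_of_forall_exists fun _ hu => by
    obtain ⟨i, hi⟩ := exists_one_div_sqrt_five_le_inner_bipyramid hu
    exact ⟨bipyramid i, Finset.mem_map_of_mem bipyramidEmb (Finset.mem_univ i),
      by rwa [norm_bipyramid, div_one]⟩

end Bipyramid

/-- the set `{(1,0,0), (-1/2, √3/2, 0), (-1/2, -√3/2, 0), (0,0,1), (0,0,-1)}` is
a positive basis of unit vectors of `ℝ³` of size 5 belonging to `Ω`, and it is optimal over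
`Ω`. -/
theorem optimal_basis_R3_size5 (D : Finset (Euc 3))
    (hDdef : (↑D : Set (Euc 3)) =
      {toEuc ![1, 0, 0], toEuc ![-(1/2), Real.sqrt 3 / 2, 0],
        toEuc ![-(1/2), -(Real.sqrt 3 / 2), 0], toEuc ![0, 0, 1], toEuc ![0, 0, -1]}) :
    IsUnitPosBasis D ∧ D.card = 5 ∧ MemOmega 5 D ∧
      ∀ D' : Finset (Euc 3), IsUnitPosBasis D' → D'.card = 5 → MemOmega 5 D' →
        cm D' ≤ cm D := by
  obtain rfl : D = Finset.univ.map bipyramidEmb :=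
    Finset.coe_injective (hDdef.trans coe_map_bipyramidEmb_univ.symm)
  refine ⟨isUnitPosBasis_bipyramid, by simp, memOmega_bipyramid, fun D' hD' hcard hΩ => ?_⟩
  exact (cm_le_one_div_sqrt_five hD'.1 hcard hΩ).trans one_div_sqrt_five_le_cm_bipyramid
end
end

section
/- The cosine measure of the positive basis of ℝ³ consisting of the five unit vectors (1, 0, 0), (−1/2, √3/2, 0), (−1/2, −√3/2, 0), (0, 0, 1), (0, 0, −1) equals 1/√5. -/
noncomputable section

open Matrix
open scoped InnerProductSpace

lemma innerEuc3 (u v : Euc 3) : ⟪u,v⟫_ℝ = u 0 * v 0 + u 1 * v 1 + u 2 * v 2 := by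
  simp [PiLp.inner_apply, Fin.sum_univ_three, RCLike.inner_apply]; ring

lemma norm_one_of_inner (v : Euc 3) (h : ⟪v,v⟫_ℝ = 1) : ‖v‖ = 1 := by
  have h2 : ‖v‖^2 = 1 := by rw [← real_inner_self_eq_norm_sq]; exact h
  calc ‖v‖ = Real.sqrt (‖v‖^2) := (Real.sqrt_sq (norm_nonneg v)).symm
    _ = 1 := by rw [h2]; exact Real.sqrt_one

lemma lb_alg (x y z s a : ℝ) (ha : a * a = 3)
    (hn : x^2 + y^2 + z^2 = 1) (h1 : x ≤ s) (h2 : -x/2 + a*y/2 ≤ s)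
    (h3 : -x/2 - a*y/2 ≤ s) (h4 : z ≤ s) (h5 : -z ≤ s) :
    1 / Real.sqrt 5 ≤ s := by
  have s5 : Real.sqrt 5 * Real.sqrt 5 = 5 := Real.mul_self_sqrt (by norm_num)
  have s5pos : (0:ℝ) < Real.sqrt 5 := Real.sqrt_pos.mpr (by norm_num)
  have hs0 : 0 ≤ s := by linarith
  have key : 1 ≤ 5 * s^2 := by
    nlinarith [mul_nonneg (sub_nonneg.mpr h1) (by linarith : (0:ℝ) ≤ x + 2*s),
      mul_nonneg (sub_nonneg.mpr h2) (sub_nonneg.mpr h3),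
      mul_nonneg (sub_nonneg.mpr h4) (sub_nonneg.mpr h5), ha]
  rw [div_le_iff₀ s5pos]
  nlinarith [mul_nonneg hs0 s5pos.le]

/-- the cosine measure of the positive basis
`{(1,0,0), (-1/2, √3/2, 0), (-1/2, -√3/2, 0), (0,0,1), (0,0,-1)}` of `ℝ³` equals `1/√5`. -/
theorem cm_optimal_basis_R3_size5 (D : Finset (Euc 3))
    (hDdef : (↑D : Set (Euc 3)) =
      {toEuc ![1, 0, 0], toEuc ![-(1/2), Real.sqrt 3 / 2, 0],
        toEuc ![-(1/2), -(Real.sqrt 3 / 2), 0], toEuc ![0, 0, 1], toEuc ![0, 0, -1]}) :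
    cm D = 1 / Real.sqrt 5 := by
  have s3 : Real.sqrt 3 * Real.sqrt 3 = 3 := Real.mul_self_sqrt (by norm_num)
  have s5 : Real.sqrt 5 * Real.sqrt 5 = 5 := Real.mul_self_sqrt (by norm_num)
  have s5pos : (0:ℝ) < Real.sqrt 5 := Real.sqrt_pos.mpr (by norm_num)
  have inv5 : (Real.sqrt 5)⁻¹ * (Real.sqrt 5)⁻¹ = 1/5 := by
    rw [← mul_inv, s5]; norm_num
  set d1 : Euc 3 := toEuc ![1, 0, 0] with hd1
  set d2 : Euc 3 := toEuc ![-(1/2), Real.sqrt 3 / 2, 0] with hd2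
  set d3 : Euc 3 := toEuc ![-(1/2), -(Real.sqrt 3 / 2), 0] with hd3
  set d4 : Euc 3 := toEuc ![0, 0, 1] with hd4
  set d5 : Euc 3 := toEuc ![0, 0, -1] with hd5
  have m1 : d1 ∈ (↑D : Set (Euc 3)) := by rw [hDdef]; simp
  have m2 : d2 ∈ (↑D : Set (Euc 3)) := by rw [hDdef]; simp
  have m3 : d3 ∈ (↑D : Set (Euc 3)) := by rw [hDdef]; simp
  have m4 : d4 ∈ (↑D : Set (Euc 3)) := by rw [hDdef]; simp
  have m5 : d5 ∈ (↑D : Set (Euc 3)) := by rw [hDdef]; simp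
  have n1 : ‖d1‖ = 1 := norm_one_of_inner _ (by rw [innerEuc3]; simp [hd1, toEuc])
  have n2 : ‖d2‖ = 1 := norm_one_of_inner _ (by
    rw [innerEuc3]; simp [hd2, toEuc]; linear_combination (1/4 : ℝ) * s3)
  have n3 : ‖d3‖ = 1 := norm_one_of_inner _ (by
    rw [innerEuc3]; simp [hd3, toEuc]; linear_combination (1/4 : ℝ) * s3)
  have n4 : ‖d4‖ = 1 := norm_one_of_inner _ (by rw [innerEuc3]; simp [hd4, toEuc])
  have n5 : ‖d5‖ = 1 := norm_one_of_inner _ (by rw [innerEuc3]; simp [hd5, toEuc])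
  have hfin : ∀ u : Euc 3, BddAbove ((fun d => ⟪u, d⟫_ℝ / ‖d‖) '' (↑D : Set (Euc 3))) :=
    fun u => ((D.finite_toSet).image _).bddAbove
  have hne : ∀ u : Euc 3, ((fun d => ⟪u, d⟫_ℝ / ‖d‖) '' (↑D : Set (Euc 3))).Nonempty :=
    fun u => ⟨_, Set.mem_image_of_mem _ m1⟩
  -- lower bound
  have lb : ∀ u : Euc 3, ‖u‖ = 1 →
      1 / Real.sqrt 5 ≤ sSup ((fun d => ⟪u, d⟫_ℝ / ‖d‖) '' (↑D : Set (Euc 3))) := by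
    intro u hu
    have hle : ∀ d ∈ (↑D : Set (Euc 3)), ⟪u, d⟫_ℝ / ‖d‖ ≤
        sSup ((fun d => ⟪u, d⟫_ℝ / ‖d‖) '' (↑D : Set (Euc 3))) :=
      fun d hd => le_csSup (hfin u) (Set.mem_image_of_mem _ hd)
    have hnorm : (u 0)^2 + (u 1)^2 + (u 2)^2 = 1 := by
      have h : ⟪u,u⟫_ℝ = 1 := by rw [real_inner_self_eq_norm_sq, hu]; norm_num
      rw [innerEuc3] at h
      linear_combination h
    have h1 := hle d1 m1
    have h2 := hle d2 m2
    have h3 := hle d3 m3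
    have h4 := hle d4 m4
    have h5 := hle d5 m5
    rw [n1, div_one, innerEuc3] at h1
    rw [n2, div_one, innerEuc3] at h2
    rw [n3, div_one, innerEuc3] at h3
    rw [n4, div_one, innerEuc3] at h4
    rw [n5, div_one, innerEuc3] at h5
    simp only [hd1, hd2, hd3, hd4, hd5, toEuc, WithLp.ofLp_toLp, Matrix.cons_val_zero, Matrix.cons_val_one,
      Matrix.head_cons, Matrix.cons_val_two, Matrix.tail_cons, mul_zero, mul_one, mul_neg,
      add_zero, zero_add, mul_neg_one] at h1 h2 h3 h4 h5
    refine lb_alg (u 0) (u 1) (u 2) _ (Real.sqrt 3) s3 hnorm (by linarith) (by linarith)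
      (by linarith) (by linarith) (by linarith)
  -- witness
  set u0 : Euc 3 := toEuc ![1 / Real.sqrt 5, Real.sqrt 3 / Real.sqrt 5, 1 / Real.sqrt 5] with hu0
  have hu0n : ‖u0‖ = 1 := by
    apply norm_one_of_inner
    rw [innerEuc3]; simp [hu0, toEuc]
    linear_combination ((Real.sqrt 5)⁻¹ * (Real.sqrt 5)⁻¹) * s3 + 5 * inv5
  have w1 : ⟪u0, d1⟫_ℝ / ‖d1‖ = 1 / Real.sqrt 5 := by
    rw [n1, div_one, innerEuc3]; simp [hu0, hd1, toEuc]
  have w2 : ⟪u0, d2⟫_ℝ / ‖d2‖ = 1 / Real.sqrt 5 := by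
    rw [n2, div_one, innerEuc3]; simp [hu0, hd2, toEuc]
    linear_combination ((Real.sqrt 5)⁻¹ / 2) * s3
  have w3 : ⟪u0, d3⟫_ℝ / ‖d3‖ = -2 / Real.sqrt 5 := by
    rw [n3, div_one, innerEuc3]; simp [hu0, hd3, toEuc]
    linear_combination (-(Real.sqrt 5)⁻¹ / 2) * s3
  have w4 : ⟪u0, d4⟫_ℝ / ‖d4‖ = 1 / Real.sqrt 5 := by
    rw [n4, div_one, innerEuc3]; simp [hu0, hd4, toEuc]
  have w5 : ⟪u0, d5⟫_ℝ / ‖d5‖ = -(1 / Real.sqrt 5) := by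
    rw [n5, div_one, innerEuc3]; simp [hu0, hd5, toEuc]
  have hpos : (0:ℝ) ≤ 1 / Real.sqrt 5 := by positivity
  have hsup0 : sSup ((fun d => ⟪u0, d⟫_ℝ / ‖d‖) '' (↑D : Set (Euc 3))) = 1 / Real.sqrt 5 := by
    apply le_antisymm
    · apply csSup_le (hne u0)
      rintro r ⟨d, hd, rfl⟩
      rw [hDdef] at hd
      rcases hd with h | h | h | h | h <;> subst h
      · exact le_of_eq w1
      · exact le_of_eq w2
      · refine le_trans (le_of_eq w3) ?_
        have : -2 / Real.sqrt 5 ≤ 0 :=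
          div_nonpos_of_nonpos_of_nonneg (by norm_num) s5pos.le
        linarith
      · exact le_of_eq w4
      · exact le_trans (le_of_eq w5) (by linarith)
    · rw [← w1]; exact le_csSup (hfin u0) (Set.mem_image_of_mem _ m1)
  -- conclude
  have hmem : 1 / Real.sqrt 5 ∈ {r : ℝ | ∃ u : Euc 3, ‖u‖ = 1 ∧
      r = sSup ((fun d => ⟪u, d⟫_ℝ / ‖d‖) '' (↑D : Set (Euc 3)))} :=
    ⟨u0, hu0n, hsup0.symm⟩
  have hlbR : ∀ r ∈ {r : ℝ | ∃ u : Euc 3, ‖u‖ = 1 ∧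
      r = sSup ((fun d => ⟪u, d⟫_ℝ / ‖d‖) '' (↑D : Set (Euc 3)))}, 1 / Real.sqrt 5 ≤ r := by
    rintro r ⟨u, hu, rfl⟩; exact lb u hu
  exact le_antisymm (csInf_le ⟨1 / Real.sqrt 5, hlbR⟩ hmem) (le_csInf ⟨_, hmem⟩ hlbR)
end
end

section
/- Let n ≥ 2 and n + 1 ≤ s ≤ 2n, and let D be a positive basis of ℝ^n of size s belonging to Ω⁺, with partition D = D_1 ∪ ... ∪ D_{s−n} into minimal positive bases D_i of pairwise orthogonal subspaces L_i of dimensions m_i with ℝ^n = L_1 ⊕ ... ⊕ L_{s−n}. Suppose (i) each D_i is an optimal minimal positive basis of L_i, i.e., D_i consists of m_i + 1 unit vectors of L_i whose pairwise inner products all equal −1/m_i; and (ii) setting r = n mod (s−n), exactly s − n − r of the dimensions m_i equal ⌊n/(s−n)⌋ and exactly r of them equal ⌈n/(s−n)⌉. Then cm(D) ≥ cm(D') for every positive basis D' of unit vectors of ℝ^n of size s belonging to Ω⁺; that is, D is optimal over Ω⁺. -/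
noncomputable section

open Matrix
open scoped InnerProductSpace

set_option maxHeartbeats 1600000

-- ===================== helper lemmas =====================

lemma pspan_repr {n : ℕ} {S : Finset (Euc n)} {v : Euc n}
    (h : v ∈ pspan (↑S : Set (Euc n))) :
    ∃ c : Euc n → ℝ, (∀ d, 0 ≤ c d) ∧ v = ∑ d ∈ S, c d • d := by
  obtain ⟨t, c, hts, hc, hv⟩ := h
  classical
  refine ⟨fun d => if d ∈ t then c d else 0, ?_, ?_⟩
  · intro d; by_cases hd : d ∈ t <;> simp [hd]; exact hc _ hd
  · have hsub : t ⊆ S := fun x hx => by exact_mod_cast hts hx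
    rw [hv, ← Finset.sum_subset hsub]
    · exact Finset.sum_congr rfl fun d hd => by simp [hd]
    · intro d _ hd; simp [hd]

lemma finrank_sum_of_internal {n : ℕ} {ι : Type} [Fintype ι] [DecidableEq ι]
    {L : ι → Submodule ℝ (Euc n)}
    (h : DirectSum.IsInternal L) :
    ∑ i, Module.finrank ℝ (L i) = n := by
  have e := LinearEquiv.ofBijective (DirectSum.coeLinearMap L) h
  have h1 := LinearEquiv.finrank_eq e
  rw [Module.finrank_directSum] at h1
  simpa using h1

lemma simplex_sum_zero {n m : ℕ} (hm : 1 ≤ m) {S : Finset (Euc n)}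
    (hcard : S.card = m + 1) (hunit : ∀ d ∈ S, ‖d‖ = 1)
    (hinner : ∀ d ∈ S, ∀ d' ∈ S, d ≠ d' → ⟪d, d'⟫_ℝ = -1 / (m : ℝ)) :
    ∑ d ∈ S, d = 0 := by
  classical
  have hm0 : (m : ℝ) ≠ 0 := by positivity
  have key : ∀ d ∈ S, ∑ d' ∈ S, ⟪d, d'⟫_ℝ = 0 := by
    intro d hd
    rw [← Finset.add_sum_erase _ _ hd]
    have h1 : ⟪d, d⟫_ℝ = 1 := by
      rw [real_inner_self_eq_norm_sq, hunit d hd]; norm_num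
    have h2 : ∑ d' ∈ S.erase d, ⟪d, d'⟫_ℝ = (m : ℝ) * (-1 / m) := by
      rw [Finset.sum_congr rfl (fun d' hd' => hinner d hd d' (Finset.mem_of_mem_erase hd')
        (Ne.symm (Finset.ne_of_mem_erase hd')))]
      rw [Finset.sum_const, Finset.card_erase_of_mem hd, hcard]
      simp [nsmul_eq_mul]
    rw [h1, h2]
    field_simp
    norm_num
  have : ⟪∑ d ∈ S, d, ∑ d ∈ S, d⟫_ℝ = 0 := by
    rw [sum_inner]
    rw [Finset.sum_congr rfl (fun d hd => by rw [inner_sum, key d hd])]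
    simp
  exact inner_self_eq_zero.mp this

lemma int_le_self_sq (x : ℤ) : x ≤ x^2 := by
  rcases le_or_gt x 0 with h | h
  · calc x ≤ 0 := h
      _ ≤ x^2 := sq_nonneg x
  · calc x = x * 1 := (mul_one x).symm
      _ ≤ x * x := by nlinarith
      _ = x^2 := (sq x).symm

lemma sum_sq_min {k : ℕ} (f : Fin k → ℕ) {n : ℕ} (hsum : ∑ i, f i = n) :
    k * (n/k)^2 + (n % k) * (2*(n/k)+1) ≤ ∑ i, (f i)^2 := by
  set q := n / k with hq
  set r := n % k with hr
  have hn : k * q + r = n := Nat.div_add_mod n k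
  have key : (k:ℤ) * q^2 + r * (2*q+1) ≤ ∑ i, ((f i : ℤ))^2 := by
    have h1 : ∀ i : Fin k, ((f i : ℤ) - q) ≤ ((f i : ℤ) - q)^2 := fun i => int_le_self_sq _
    have h2 : ∑ i, (((f i : ℤ)) - q) ≤ ∑ i, ((f i : ℤ) - q)^2 := Finset.sum_le_sum fun i _ => h1 i
    have h3 : ∑ i, (((f i : ℤ)) - q) = (r : ℤ) := by
      rw [Finset.sum_sub_distrib, Finset.sum_const]
      have hc : ∑ i, ((f i : ℤ)) = (n : ℤ) := by
        rw [← Nat.cast_sum, hsum]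
      rw [hc]
      simp only [Finset.card_univ, Fintype.card_fin, nsmul_eq_mul]
      have : (k:ℤ) * q + r = n := by exact_mod_cast hn
      linarith
    have h4 : ∑ i, ((f i : ℤ) - q)^2
        = ∑ i, ((f i:ℤ))^2 - 2*q*(n:ℤ) + k * q^2 := by
      have e : ∀ i : Fin k, ((f i : ℤ) - q)^2 = ((f i:ℤ))^2 - 2*q*(f i:ℤ) + q^2 :=
        fun i => by ring
      rw [Finset.sum_congr rfl fun i _ => e i]
      rw [Finset.sum_add_distrib, Finset.sum_sub_distrib, ← Finset.mul_sum, Finset.sum_const]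
      have hc : ∑ i, ((f i : ℤ)) = (n : ℤ) := by
        rw [← Nat.cast_sum, hsum]
      rw [hc]
      simp only [Finset.card_univ, Fintype.card_fin, nsmul_eq_mul]
      try ring
    have h5 : (k:ℤ)*q + r = n := by exact_mod_cast hn
    nlinarith [h2, h3.symm ▸ h2]
  have : ((k * q^2 + r * (2*q+1) : ℕ) : ℤ) ≤ ((∑ i, (f i)^2 : ℕ) : ℤ) := by
    push_cast
    convert key using 2
  exact_mod_cast this

lemma inner_sum_orth_left {n : ℕ} {ι : Type} [Fintype ι] [DecidableEq ι]
    (w : ι → Euc n) (d : Euc n) (i : ι)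
    (h : ∀ j, j ≠ i → ⟪w j, d⟫_ℝ = 0) : ⟪∑ j, w j, d⟫_ℝ = ⟪w i, d⟫_ℝ := by
  rw [sum_inner]
  exact Finset.sum_eq_single_of_mem i (Finset.mem_univ i) (fun j _ hj => h j hj)

lemma inner_self_sum_orth {n : ℕ} {ι : Type} [Fintype ι] [DecidableEq ι]
    (w : ι → Euc n) (h : ∀ i j, i ≠ j → ⟪w i, w j⟫_ℝ = 0) :
    ⟪∑ i, w i, ∑ i, w i⟫_ℝ = ∑ i, ‖w i‖^2 := by
  rw [sum_inner]
  refine Finset.sum_congr rfl fun i _ => ?_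
  rw [inner_sum]
  rw [Finset.sum_eq_single_of_mem i (Finset.mem_univ i)
    (fun j _ hj => h i j (Ne.symm hj))]
  rw [real_inner_self_eq_norm_sq]

lemma simplex_lower {n m : ℕ} (hm : 1 ≤ m) {S : Finset (Euc n)}
    {L : Submodule ℝ (Euc n)}
    (hcard : S.card = m + 1) (hunit : ∀ d ∈ S, ‖d‖ = 1)
    (hinner : ∀ d ∈ S, ∀ d' ∈ S, d ≠ d' → ⟪d, d'⟫_ℝ = -1 / (m : ℝ))
    (hpspan : pspan (↑S : Set (Euc n)) = (L : Set (Euc n)))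
    {v : Euc n} (hv : v ∈ L) :
    ∃ d ∈ S, ‖v‖ / m ≤ ⟪d, v⟫_ℝ := by
  classical
  have hm0 : (0:ℝ) < m := by positivity
  have hmne : (m:ℝ) ≠ 0 := ne_of_gt hm0
  have hm1 : (1:ℝ) ≤ m := by exact_mod_cast hm
  have hSne : S.Nonempty := Finset.card_pos.mp (by omega)
  have hvp : v ∈ pspan (↑S : Set (Euc n)) := by rw [hpspan]; exact hv
  obtain ⟨c, hc, hvc⟩ := pspan_repr hvp
  obtain ⟨d0, hd0S, hd0min⟩ := S.exists_min_image c hSne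
  set μ := c d0 with hμ
  set b : Euc n → ℝ := fun d => c d - μ with hb
  have hbnn : ∀ d ∈ S, 0 ≤ b d := fun d hd => sub_nonneg.mpr (hd0min d hd)
  have hsum0 := simplex_sum_zero hm hcard hunit hinner
  have hvb : v = ∑ d ∈ S, b d • d := by
    rw [hvc]
    have : ∑ d ∈ S, b d • d = ∑ d ∈ S, c d • d - μ • ∑ d ∈ S, d := by
      rw [Finset.smul_sum, ← Finset.sum_sub_distrib]
      exact Finset.sum_congr rfl fun d _ => by rw [hb]; simp [sub_smul]
    rw [this, hsum0, smul_zero, sub_zero]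
  set T := ∑ d ∈ S, b d with hT
  set Q := ∑ d ∈ S, b d ^ 2 with hQ
  have hTnn : 0 ≤ T := Finset.sum_nonneg hbnn
  have h1 : ‖v‖ ^ 2 = ∑ d ∈ S, b d * ⟪d, v⟫_ℝ := by
    rw [← real_inner_self_eq_norm_sq]
    nth_rewrite 1 [hvb]
    rw [sum_inner]
    exact Finset.sum_congr rfl fun d _ => real_inner_smul_left _ _ _
  have hdv : ∀ d ∈ S, ⟪d, v⟫_ℝ = b d - (1/m) * (T - b d) := by
    intro d hd
    rw [hvb, inner_sum]
    rw [Finset.sum_congr rfl (fun d' _ => real_inner_smul_right d d' (b d'))]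
    rw [← Finset.add_sum_erase _ _ hd]
    have hdd : ⟪d, d⟫_ℝ = 1 := by rw [real_inner_self_eq_norm_sq, hunit d hd]; norm_num
    have herase : ∑ d' ∈ S.erase d, b d' * ⟪d, d'⟫_ℝ = (-1/m) * (T - b d) := by
      rw [Finset.sum_congr rfl (fun d' hd' => by
        rw [hinner d hd d' (Finset.mem_of_mem_erase hd')
          (Ne.symm (Finset.ne_of_mem_erase hd'))]), ← Finset.sum_mul,
        Finset.sum_erase_eq_sub hd]
      ring
    rw [hdd, herase]
    ring
  have h2 : ‖v‖ ^ 2 = Q - (1/m) * (T*T - Q) := by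
    rw [h1, Finset.sum_congr rfl (fun d hd => by rw [hdv d hd])]
    have e1 : ∀ d : Euc n, b d * (b d - 1/(m:ℝ)*(T - b d))
        = (1 + 1/m) * b d^2 - (1/m*T) * b d := fun d => by ring
    rw [Finset.sum_congr rfl fun d _ => e1 d, Finset.sum_sub_distrib,
      ← Finset.mul_sum, ← Finset.mul_sum, ← hT, ← hQ]
    ring
  have h3 : T ^ 2 ≤ (m:ℝ) * Q := by
    have hb0 : b d0 = 0 := by simp [hb, hμ]
    have hTe : T = ∑ d ∈ S.erase d0, b d := by
      rw [hT, ← Finset.add_sum_erase _ _ hd0S, hb0, zero_add]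
    have hsq : Q = ∑ d ∈ S.erase d0, b d ^ 2 := by
      rw [hQ, ← Finset.add_sum_erase _ _ hd0S, hb0]
      norm_num
    have := sq_sum_le_card_mul_sum_sq (s := S.erase d0) (f := b)
    rw [Finset.card_erase_of_mem hd0S, hcard] at this
    rw [hTe, hsq]
    simpa using this
  have h2' : (m:ℝ) * ‖v‖^2 = ((m:ℝ)+1) * Q - T^2 := by
    have hx : (m:ℝ) * ((1/m) * (T*T - Q)) = T*T - Q := by
      field_simp
    calc (m:ℝ) * ‖v‖^2 = m * (Q - (1/m)*(T*T-Q)) := by rw [h2]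
      _ = m*Q - (T*T - Q) := by rw [mul_sub, hx]
      _ = ((m:ℝ)+1)*Q - T^2 := by ring
  have hQle : Q ≤ (m:ℝ) * ‖v‖^2 := by nlinarith [h2', h3]
  have hT2 : T^2 ≤ ((m:ℝ)*‖v‖)^2 := by nlinarith [h3, hQle, hm1, norm_nonneg v, hm0]
  have hTle : T ≤ (m:ℝ) * ‖v‖ := by
    have h4 : (0:ℝ) ≤ (m:ℝ) * ‖v‖ := by positivity
    calc T = Real.sqrt (T^2) := (Real.sqrt_sq hTnn).symm
      _ ≤ Real.sqrt (((m:ℝ)*‖v‖)^2) := Real.sqrt_le_sqrt hT2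
      _ = (m:ℝ)*‖v‖ := Real.sqrt_sq h4
  by_contra hcon
  push_neg at hcon
  have hvne : v ≠ 0 := by
    intro h0
    obtain ⟨d, hd⟩ := hSne
    have := hcon d hd
    rw [h0] at this
    simp at this
  have hvpos : (0:ℝ) < ‖v‖ := norm_pos_iff.mpr hvne
  have hTpos : 0 < T := by
    rcases lt_or_eq_of_le hTnn with h | h
    · exact h
    exfalso; apply hvne
    have hball : ∀ d ∈ S, b d = 0 := by
      intro d hd
      by_contra hne
      have hbd : 0 < b d := lt_of_le_of_ne (hbnn d hd) (Ne.symm hne)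
      have : 0 < T := Finset.sum_pos' hbnn ⟨d, hd, hbd⟩
      linarith
    rw [hvb]
    exact Finset.sum_eq_zero fun d hd => by rw [hball d hd, zero_smul]
  obtain ⟨d1, hd1S, hd1pos⟩ : ∃ d ∈ S, 0 < b d := by
    by_contra hno
    push_neg at hno
    have : T ≤ 0 := Finset.sum_nonpos hno
    linarith
  have hlt : ∑ d ∈ S, b d * ⟪d, v⟫_ℝ < ∑ d ∈ S, b d * (‖v‖ / m) := by
    apply Finset.sum_lt_sum
    · intro d hd
      exact mul_le_mul_of_nonneg_left (le_of_lt (hcon d hd)) (hbnn d hd)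
    · exact ⟨d1, hd1S, mul_lt_mul_of_pos_left (hcon d1 hd1S) hd1pos⟩
  rw [← h1, ← Finset.sum_mul, ← hT] at hlt
  have hstep : T * (‖v‖ / m) ≤ ((m:ℝ) * ‖v‖) * (‖v‖ / m) :=
    mul_le_mul_of_nonneg_right hTle (by positivity)
  have heq : ((m:ℝ) * ‖v‖) * (‖v‖ / m) = ‖v‖^2 := by field_simp
  linarith

lemma minbasis_upper {n : ℕ} {L : Submodule ℝ (Euc n)} {S : Finset (Euc n)}
    (hmb : IsMinPosBasisOf L S) (hm : 1 ≤ Module.finrank ℝ L) :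
    ∃ v, v ∈ L ∧ ‖v‖ = 1 ∧
      ∀ d ∈ S, ⟪v, d⟫_ℝ ≤ 1 / (Module.finrank ℝ L : ℝ) := by
  classical
  obtain ⟨hunit, hsub, _, hpspan, hcard⟩ := hmb
  set m := Module.finrank ℝ L with hmdef
  have hm0 : (0:ℝ) < m := by positivity
  have hmne : (m:ℝ) ≠ 0 := ne_of_gt hm0
  have hSne : S.Nonempty := Finset.card_pos.mp (by omega)
  -- strictly positive dependence
  have hsumL : -(∑ d ∈ S, d) ∈ pspan (↑S : Set (Euc n)) := by
    rw [hpspan]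
    exact Submodule.neg_mem _ (Submodule.sum_mem _ fun d hd => hsub hd)
  obtain ⟨c, hc, hcsum⟩ := pspan_repr hsumL
  set lam : Euc n → ℝ := fun d => 1 + c d with hlam
  have hlam1 : ∀ d, (1:ℝ) ≤ lam d := fun d => by
    simp only [hlam]; linarith [hc d]
  have hlampos : ∀ d, (0:ℝ) < lam d := fun d => lt_of_lt_of_le one_pos (hlam1 d)
  have hlamsum : ∑ d ∈ S, lam d • d = 0 := by
    have : ∑ d ∈ S, lam d • d = ∑ d ∈ S, d + ∑ d ∈ S, c d • d := by
      rw [← Finset.sum_add_distrib]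
      exact Finset.sum_congr rfl fun d _ => by simp [hlam, add_smul]
    rw [this, ← hcsum]
    simp
  set Λ := ∑ d ∈ S, lam d with hΛ
  obtain ⟨k, hkS, hkmin⟩ := S.exists_min_image lam hSne
  have hΛk : ((m:ℝ) + 1) * lam k ≤ Λ := by
    have h := Finset.card_nsmul_le_sum S lam (lam k) (fun d hd => hkmin d hd)
    rw [hcard] at h
    rw [hΛ]
    calc ((m:ℝ)+1) * lam k = ((m+1 : ℕ) : ℝ) * lam k := by push_cast; ring
      _ ≤ _ := by rw [← nsmul_eq_mul]; exact h
  -- the hyperplane normal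
  have herasene : (S.erase k).Nonempty := by
    rw [← Finset.card_pos, Finset.card_erase_of_mem hkS, hcard]; omega
  obtain ⟨d0, hd0⟩ := herasene
  have hd0S : d0 ∈ S := Finset.mem_of_mem_erase hd0
  set G : Finset (Euc n) := ((S.erase k).erase d0).image (fun d => d - d0) with hG
  set W : Submodule ℝ (Euc n) := Submodule.span ℝ (↑G : Set (Euc n)) with hW
  have hWL : W ≤ L := by
    rw [hW, Submodule.span_le]
    intro x hx
    simp only [hG, Finset.coe_image, Set.mem_image] at hx
    obtain ⟨d, hd, rfl⟩ := hx
    exact Submodule.sub_mem _ (hsub (Finset.mem_of_mem_erase (Finset.mem_of_mem_erase hd)))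
      (hsub hd0S)
  have hWrank : Module.finrank ℝ W < m := by
    have h1 : Module.finrank ℝ W ≤ G.card := finrank_span_finset_le_card G
    have h2 : G.card ≤ m - 1 := by
      rw [hG]
      calc (Finset.image (fun d => d - d0) ((S.erase k).erase d0)).card
          ≤ ((S.erase k).erase d0).card := Finset.card_image_le
        _ ≤ m - 1 := by
            rw [Finset.card_erase_of_mem hd0, Finset.card_erase_of_mem hkS, hcard]
            omega
    omega
  have hWne : W ≠ L := fun h => by rw [h] at hWrank; omega
  obtain ⟨x, hxL, hxW⟩ : ∃ x ∈ L, x ∉ W := by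
    by_contra hno
    push_neg at hno
    exact hWne (le_antisymm hWL hno)
  set u0 : Euc n := x - (W.orthogonalProjection x : Euc n) with hu0
  have hu0W : u0 ∈ Wᗮ := W.sub_starProjection_mem_orthogonal x
  have hu0L : u0 ∈ L := Submodule.sub_mem _ hxL (hWL (W.orthogonalProjection x).2)
  have hu0ne : u0 ≠ 0 := by
    intro h
    apply hxW
    have : x = (W.orthogonalProjection x : Euc n) := by
      rwa [hu0, sub_eq_zero] at h
    rw [this]
    exact (W.orthogonalProjection x).2
  set u1 : Euc n := ‖u0‖⁻¹ • u0 with hu1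
  have hu1norm : ‖u1‖ = 1 := norm_smul_inv_norm hu0ne
  have hu1L : u1 ∈ L := Submodule.smul_mem _ _ hu0L
  have hu1W : u1 ∈ Wᗮ := Submodule.smul_mem _ _ hu0W
  set c0 := ⟪u1, d0⟫_ℝ with hc0
  set u : Euc n := if c0 < 0 then -u1 else u1 with hu
  have hunorm : ‖u‖ = 1 := by
    rw [hu]; split_ifs <;> simp [hu1norm]
  have huL : u ∈ L := by
    rw [hu]; split_ifs
    · exact Submodule.neg_mem _ hu1L
    · exact hu1L
  have huW : u ∈ Wᗮ := by
    rw [hu]; split_ifs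
    · exact Submodule.neg_mem _ hu1W
    · exact hu1W
  set cc := ⟪u, d0⟫_ℝ with hcc
  have hccnn : 0 ≤ cc := by
    rw [hcc, hu]
    split_ifs with h
    · rw [inner_neg_left, ← hc0]; linarith
    · rw [← hc0]; linarith [not_lt.mp h]
  -- all of S.erase k has the same inner product with u
  have hconst : ∀ d ∈ S.erase k, ⟪u, d⟫_ℝ = cc := by
    intro d hd
    by_cases hdd0 : d = d0
    · rw [hdd0]
    have hdG : d - d0 ∈ W := by
      rw [hW]
      apply Submodule.subset_span
      simp only [hG, Finset.coe_image, Set.mem_image]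
      exact ⟨d, Finset.mem_erase.mpr ⟨hdd0, hd⟩, rfl⟩
    have h0 : ⟪u, d - d0⟫_ℝ = 0 := by
      have := (Submodule.mem_orthogonal W u).mp huW _ hdG
      rwa [real_inner_comm] at this
    rw [inner_sub_right] at h0
    rw [hcc]
    linarith
  -- evaluate the dependence relation
  have hrel : lam k * ⟪u, k⟫_ℝ + (Λ - lam k) * cc = 0 := by
    have h0 : ⟪u, ∑ d ∈ S, lam d • d⟫_ℝ = 0 := by rw [hlamsum, inner_zero_right]
    rw [inner_sum] at h0
    rw [Finset.sum_congr rfl (fun d _ => real_inner_smul_right u d (lam d))] at h0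
    rw [← Finset.add_sum_erase _ _ hkS] at h0
    rw [Finset.sum_congr rfl (fun d hd => by rw [hconst d hd])] at h0
    rw [← Finset.sum_mul, Finset.sum_erase_eq_sub hkS, ← hΛ] at h0
    linarith
  have hukge : (-1:ℝ) ≤ ⟪u, k⟫_ℝ := by
    have h := abs_real_inner_le_norm u k
    rw [hunorm, hunit k hkS, one_mul] at h
    have := abs_le.mp h
    linarith [this.1]
  have hfrac : cc * (Λ - lam k) ≤ lam k := by
    have : lam k * ⟪u, k⟫_ℝ ≥ lam k * (-1) :=
      mul_le_mul_of_nonneg_left hukge (le_of_lt (hlampos k))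
    nlinarith [hrel]
  have hΛmk : (m:ℝ) * lam k ≤ Λ - lam k := by linarith [hΛk]
  have hccle : cc ≤ 1 / m := by
    have h1 : cc * ((m:ℝ) * lam k) ≤ cc * (Λ - lam k) :=
      mul_le_mul_of_nonneg_left hΛmk hccnn
    have h2 : cc * ((m:ℝ) * lam k) ≤ lam k := le_trans h1 hfrac
    rw [le_div_iff₀ hm0]
    have h4 : (cc * (m:ℝ)) * lam k ≤ 1 * lam k := by
      rw [mul_assoc, one_mul]; exact h2
    exact le_of_mul_le_mul_right h4 (hlampos k)
  refine ⟨u, huL, hunorm, fun d hd => ?_⟩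
  by_cases hdk : d = k
  · subst hdk
    have hukle : ⟪u, d⟫_ℝ ≤ 0 := by
      by_contra hpos
      push_neg at hpos
      have : lam d * ⟪u, d⟫_ℝ > 0 := mul_pos (hlampos d) hpos
      have hcc2 : 0 ≤ (Λ - lam d) * cc :=
        mul_nonneg (by linarith [hΛmk, mul_pos hm0 (hlampos d)]) hccnn
      linarith [hrel]
    calc ⟪u, d⟫_ℝ ≤ 0 := hukle
      _ ≤ 1 / m := by positivity
  · have := hconst d (Finset.mem_erase.mpr ⟨hdk, hd⟩)
    rw [this]
    exact hccle

lemma cm_lower {n s : ℕ} (hn : 2 ≤ n) (hs1 : n + 1 ≤ s)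
    (D : Finset (Euc n))
    (L : Fin (s - n) → Submodule ℝ (Euc n)) (P : Fin (s - n) → Finset (Euc n))
    (hpart : IsOmegaPartition D L P)
    (horth : ∀ i j, i ≠ j → ∀ x ∈ L i, ∀ y ∈ L j, ⟪x, y⟫_ℝ = 0)
    (hoptmin : ∀ i, ∀ d ∈ P i, ∀ d' ∈ P i, d ≠ d' →
      ⟪d, d'⟫_ℝ = -1 / (Module.finrank ℝ (L i) : ℝ)) :
    1 / Real.sqrt (∑ i, (Module.finrank ℝ (L i) : ℝ)^2) ≤ cm D := by
  classical
  obtain ⟨hrk, hmin, hdisj, hcover, hint⟩ := hpart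
  have hkpos : 0 < s - n := by omega
  have hne : Nonempty (Fin (s - n)) := ⟨⟨0, hkpos⟩⟩
  set A : ℝ := ∑ i, (Module.finrank ℝ (L i) : ℝ)^2 with hA
  have hApos : 0 < A := by
    rw [hA]
    apply Finset.sum_pos
    · intro i _
      have := hrk i
      positivity
    · exact Finset.univ_nonempty
  have hsq : Real.sqrt A > 0 := Real.sqrt_pos.mpr hApos
  set t : ℝ := 1 / Real.sqrt A with ht
  have htpos : 0 < t := by positivity
  apply le_csInf
  · -- nonempty
    refine ⟨sSup ((fun d => ⟪EuclideanSpace.single (⟨0, by omega⟩ : Fin n) (1:ℝ), d⟫_ℝ / ‖d‖)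
      '' (↑D : Set (Euc n))), EuclideanSpace.single (⟨0, by omega⟩ : Fin n) (1:ℝ), ?_, rfl⟩
    rw [EuclideanSpace.norm_single]
    norm_num
  · rintro r ⟨u, hu, rfl⟩
    -- decompose u
    have humem : u ∈ iSup L := by
      rw [hint.submodule_iSup_eq_top]; trivial
    obtain ⟨f, hf, hfsum⟩ := (Submodule.mem_iSup_iff_exists_finsupp L u).mp humem
    set w : Fin (s-n) → Euc n := fun i => f i with hw
    have hwsum : ∑ i, w i = u := by
      rw [← hfsum, Finsupp.sum_fintype]
      intro i; rfl
    have hwmem : ∀ i, w i ∈ L i := fun i => hf i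
    have hworth : ∀ i j, i ≠ j → ⟪w i, w j⟫_ℝ = 0 :=
      fun i j hij => horth i j hij _ (hwmem i) _ (hwmem j)
    have hnorm1 : ∑ i, ‖w i‖^2 = 1 := by
      have := inner_self_sum_orth w hworth
      rw [hwsum, real_inner_self_eq_norm_sq, hu] at this
      rw [← this]; norm_num
    -- find good index
    obtain ⟨i0, hi0⟩ : ∃ i, (Module.finrank ℝ (L i) : ℝ) * t ≤ ‖w i‖ := by
      by_contra hno
      push_neg at hno
      have hlt : ∑ i, ‖w i‖^2 < ∑ i, ((Module.finrank ℝ (L i) : ℝ) * t)^2 := by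
        apply Finset.sum_lt_sum_of_nonempty Finset.univ_nonempty
        intro i _
        exact pow_lt_pow_left₀ (hno i) (norm_nonneg _) two_ne_zero
      have hsum : ∑ i, ((Module.finrank ℝ (L i) : ℝ) * t)^2 = 1 := by
        have : ∀ i : Fin (s-n), ((Module.finrank ℝ (L i) : ℝ) * t)^2
            = (Module.finrank ℝ (L i) : ℝ)^2 * t^2 := fun i => by ring
        rw [Finset.sum_congr rfl fun i _ => this i, ← Finset.sum_mul, ← hA, ht]
        rw [div_pow, one_pow, Real.sq_sqrt hApos.le]
        field_simp
      rw [hnorm1, hsum] at hlt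
      exact lt_irrefl _ hlt
    -- apply simplex lower bound in L i0
    obtain ⟨hPunit, hPsub, _, hPspan, hPcard⟩ := hmin i0
    obtain ⟨d, hdP, hdlow⟩ := simplex_lower (hrk i0) hPcard hPunit (hoptmin i0) hPspan (hwmem i0)
    have hdL : d ∈ L i0 := hPsub hdP
    have hdD : d ∈ (↑D : Set (Euc n)) := by
      rw [hcover]
      exact Set.mem_iUnion.mpr ⟨i0, hdP⟩
    have hdnorm : ‖d‖ = 1 := hPunit d hdP
    have hud : ⟪u, d⟫_ℝ = ⟪w i0, d⟫_ℝ := by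
      rw [← hwsum]
      exact inner_sum_orth_left w d i0 (fun j hj => horth j i0 hj _ (hwmem j) _ hdL)
    have hchain : t ≤ ⟪u, d⟫_ℝ / ‖d‖ := by
      rw [hdnorm, div_one, hud, real_inner_comm d (w i0)]
      have hm0 : (0:ℝ) < (Module.finrank ℝ (L i0) : ℝ) := by
        have := hrk i0; positivity
      calc t = ((Module.finrank ℝ (L i0) : ℝ) * t) / (Module.finrank ℝ (L i0) : ℝ) := by
            field_simp
        _ ≤ ‖w i0‖ / (Module.finrank ℝ (L i0) : ℝ) := by
            gcongr
        _ ≤ ⟪d, w i0⟫_ℝ := hdlow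
    refine le_trans hchain (le_csSup ?_ ?_)
    · exact (D.finite_toSet.image _).bddAbove
    · exact ⟨d, hdD, rfl⟩

lemma cm_upper {n s : ℕ} (hn : 2 ≤ n) (hs1 : n + 1 ≤ s)
    (D : Finset (Euc n)) (hD : IsUnitPosBasis D) (hcard : D.card = s)
    (L : Fin (s - n) → Submodule ℝ (Euc n)) (P : Fin (s - n) → Finset (Euc n))
    (hpart : IsOmegaPartition D L P)
    (horth : ∀ i j, i ≠ j → ∀ x ∈ L i, ∀ y ∈ L j, ⟪x, y⟫_ℝ = 0) :
    cm D ≤ 1 / Real.sqrt (∑ i, (Module.finrank ℝ (L i) : ℝ)^2) := by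
  classical
  obtain ⟨hrk, hmin, hdisj, hcover, hint⟩ := hpart
  have hkpos : 0 < s - n := by omega
  have hne : Nonempty (Fin (s - n)) := ⟨⟨0, hkpos⟩⟩
  set A : ℝ := ∑ i, (Module.finrank ℝ (L i) : ℝ)^2 with hA
  have hApos : 0 < A := by
    rw [hA]
    apply Finset.sum_pos
    · intro i _
      have := hrk i
      positivity
    · exact Finset.univ_nonempty
  have hsqA : 0 < Real.sqrt A := Real.sqrt_pos.mpr hApos
  have hDne : D.Nonempty := Finset.card_pos.mp (by omega)
  -- choose optimal unit vectors in each subspace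
  have hch : ∀ i : Fin (s-n), ∃ v, v ∈ L i ∧ ‖v‖ = 1 ∧
      ∀ d ∈ P i, ⟪v, d⟫_ℝ ≤ 1 / (Module.finrank ℝ (L i) : ℝ) :=
    fun i => minbasis_upper (hmin i) (hrk i)
  choose v hvL hvnorm hvle using hch
  set w : Fin (s-n) → Euc n :=
    fun i => ((Module.finrank ℝ (L i) : ℝ) / Real.sqrt A) • v i with hw
  set u : Euc n := ∑ i, w i with hu
  have hworth : ∀ i j, i ≠ j → ⟪w i, w j⟫_ℝ = 0 := by
    intro i j hij
    rw [hw]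
    simp only [real_inner_smul_left, real_inner_smul_right]
    rw [horth i j hij _ (hvL i) _ (hvL j)]
    ring
  have hunorm : ‖u‖ = 1 := by
    have h1 : ⟪u, u⟫_ℝ = ∑ i, ‖w i‖^2 := inner_self_sum_orth w hworth
    have h2 : ∀ i : Fin (s-n), ‖w i‖^2 = (Module.finrank ℝ (L i) : ℝ)^2 / A := by
      intro i
      rw [hw]
      rw [norm_smul, hvnorm i, mul_one, Real.norm_eq_abs, abs_div]
      rw [abs_of_nonneg (by positivity : (0:ℝ) ≤ (Module.finrank ℝ (L i) : ℝ)),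
        abs_of_nonneg hsqA.le, div_pow, Real.sq_sqrt hApos.le]
    have h3 : ⟪u, u⟫_ℝ = 1 := by
      rw [h1, Finset.sum_congr rfl fun i _ => h2 i, ← Finset.sum_div, ← hA]
      field_simp
    have h4 : ‖u‖^2 = 1 := by rw [← real_inner_self_eq_norm_sq, h3]
    calc ‖u‖ = Real.sqrt (‖u‖^2) := (Real.sqrt_sq (norm_nonneg u)).symm
      _ = 1 := by rw [h4, Real.sqrt_one]
  -- each d in D has small inner product with u
  have hbound : ∀ d ∈ (↑D : Set (Euc n)), ⟪u, d⟫_ℝ / ‖d‖ ≤ 1 / Real.sqrt A := by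
    intro d hdD
    have hdD' : d ∈ D := hdD
    have hdnorm : ‖d‖ = 1 := hD.1 d hdD'
    have hdU : d ∈ ⋃ i, (↑(P i) : Set (Euc n)) := by rw [← hcover]; exact hdD
    rw [Set.mem_iUnion] at hdU
    obtain ⟨i, hdP'⟩ := hdU
    have hdP : d ∈ P i := hdP'

    have hdL : d ∈ L i := (hmin i).2.1 hdP
    have hud : ⟪u, d⟫_ℝ = ⟪w i, d⟫_ℝ := by
      rw [hu]
      exact inner_sum_orth_left w d i (fun j hj => by
        rw [hw]
        simp only [real_inner_smul_left]
        rw [horth j i hj _ (hvL j) _ hdL]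
        ring)
    have hm0 : (0:ℝ) < (Module.finrank ℝ (L i) : ℝ) := by
      have := hrk i; positivity
    rw [hdnorm, div_one, hud, hw]
    simp only [real_inner_smul_left]
    calc (Module.finrank ℝ (L i) : ℝ) / Real.sqrt A * ⟪v i, d⟫_ℝ
        ≤ (Module.finrank ℝ (L i) : ℝ) / Real.sqrt A * (1 / (Module.finrank ℝ (L i) : ℝ)) := by
          apply mul_le_mul_of_nonneg_left (hvle i d hdP) (by positivity)
      _ = 1 / Real.sqrt A := by field_simp; try ring
  -- conclude
  have hmem : sSup ((fun d => ⟪u, d⟫_ℝ / ‖d‖) '' (↑D : Set (Euc n)))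
      ∈ {r : ℝ | ∃ u' : Euc n, ‖u'‖ = 1 ∧
        r = sSup ((fun d => ⟪u', d⟫_ℝ / ‖d‖) '' (↑D : Set (Euc n)))} := ⟨u, hunorm, rfl⟩
  have hbdd : BddBelow {r : ℝ | ∃ u' : Euc n, ‖u'‖ = 1 ∧
      r = sSup ((fun d => ⟪u', d⟫_ℝ / ‖d‖) '' (↑D : Set (Euc n)))} := by
    refine ⟨-1, ?_⟩
    rintro r ⟨u', hu', rfl⟩
    obtain ⟨d0, hd0⟩ := hDne
    have hval : (-1 : ℝ) ≤ ⟪u', d0⟫_ℝ / ‖d0‖ := by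
      have hd0n : ‖d0‖ = 1 := hD.1 d0 hd0
      rw [hd0n, div_one]
      have h := abs_real_inner_le_norm u' d0
      rw [hu', hd0n, one_mul] at h
      linarith [(abs_le.mp h).1]
    refine le_trans hval (le_csSup ((D.finite_toSet.image _).bddAbove) ?_)
    exact ⟨d0, hd0, rfl⟩
  refine le_trans (csInf_le hbdd hmem) ?_
  apply csSup_le
  · exact (Set.Nonempty.image _ ⟨hDne.choose, hDne.choose_spec⟩)
  · rintro x ⟨d, hdD, rfl⟩
    exact hbound d hdD

lemma ceil_div_eq (N k : ℕ) (hk : 0 < k) (hr : 0 < N % k) :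
    (N + k - 1) / k = N / k + 1 := by
  have hq := Nat.div_add_mod N k
  set q := N / k with hqd
  set r := N % k with hrd
  have h2 : k * (q + 1) = k * q + k := Nat.mul_succ k q
  have h1 : N + k - 1 = k * (q+1) + (r - 1) := by omega
  have hrlt : r < k := Nat.mod_lt N hk
  rw [h1, Nat.mul_add_div hk, Nat.div_eq_of_lt (by omega)]

lemma nat_sub_arith (K R Q : ℕ) (h : R ≤ K) :
    (K - R) * Q^2 + R*(Q+1)^2 = K*Q^2 + R*(2*Q+1) := by
  obtain ⟨M, rfl⟩ : ∃ M, K = R + M := ⟨K - R, by omega⟩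
  have h2 : R + M - R = M := by omega
  rw [h2]
  ring


/-- sufficient conditions for a positive basis `D ∈ Ω⁺` of size `s` to be optimal
over `Ω⁺`: (i) every minimal sub-positive basis `P i` is optimal (pairwise inner products equal
`-1/m i`), and (ii) exactly `s - n - r` of the dimensions equal `⌊n/(s-n)⌋` and exactly `r` of
them equal `⌈n/(s-n)⌉`, where `r = n % (s-n)`. -/
theorem optimal_over_omegaPlus_of_structure {n s : ℕ} (hn : 2 ≤ n)
    (hs1 : n + 1 ≤ s) (hs2 : s ≤ 2 * n)
    (D : Finset (Euc n)) (hD : IsUnitPosBasis D) (hcard : D.card = s)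
    (L : Fin (s - n) → Submodule ℝ (Euc n)) (P : Fin (s - n) → Finset (Euc n))
    (hpart : IsOmegaPartition D L P)
    (horth : ∀ i j, i ≠ j → ∀ x ∈ L i, ∀ y ∈ L j, ⟪x, y⟫_ℝ = 0)
    (hoptmin : ∀ i, ∀ d ∈ P i, ∀ d' ∈ P i, d ≠ d' →
      ⟪d, d'⟫_ℝ = -1 / (Module.finrank ℝ (L i) : ℝ))
    (hdims : ∃ J K : Finset (Fin (s - n)), Disjoint J K ∧ J ∪ K = Finset.univ ∧
      J.card = s - n - n % (s - n) ∧ K.card = n % (s - n) ∧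
      (∀ i ∈ J, Module.finrank ℝ (L i) = n / (s - n)) ∧
      (∀ i ∈ K, Module.finrank ℝ (L i) = (n + (s - n) - 1) / (s - n))) :
    ∀ D' : Finset (Euc n), IsUnitPosBasis D' → D'.card = s → MemOmegaPlus s D' →
      cm D' ≤ cm D := by
  classical
  intro D' hD' hcard' hmem'
  obtain ⟨L', P', hpart', horth'⟩ := hmem'
  have hkpos : 0 < s - n := by omega
  have hrlt : n % (s - n) < s - n := Nat.mod_lt n hkpos
  have hnqr : (s - n) * (n / (s - n)) + n % (s - n) = n := Nat.div_add_mod n (s - n)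
  -- the value of the sum of squares for D
  have hAeq : ∑ i, (Module.finrank ℝ (L i))^2
      = (s - n)*(n / (s - n))^2 + (n % (s - n))*(2*(n / (s - n))+1) := by
    obtain ⟨J, K, hJK, hunion, hJcard, hKcard, hJval, hKval⟩ := hdims
    have hsplit : ∑ i, (Module.finrank ℝ (L i))^2
        = ∑ i ∈ J, (Module.finrank ℝ (L i))^2 + ∑ i ∈ K, (Module.finrank ℝ (L i))^2 := by
      rw [← Finset.sum_union hJK, hunion]
    have hJsum : ∑ i ∈ J, (Module.finrank ℝ (L i))^2
        = (s - n - n % (s - n)) * (n / (s - n))^2 := by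
      rw [Finset.sum_congr rfl (fun i hi => by rw [hJval i hi]), Finset.sum_const,
        hJcard, smul_eq_mul]
    have hKsum : ∑ i ∈ K, (Module.finrank ℝ (L i))^2
        = (n % (s - n)) * ((n / (s - n))+1)^2 := by
      rcases Nat.eq_zero_or_pos (n % (s - n)) with h0 | hpos
      · have hKe : K = ∅ := Finset.card_eq_zero.mp (by rw [hKcard, h0])
        rw [hKe, h0]
        simp
      · have hceil : (n + (s - n) - 1) / (s - n) = n / (s - n) + 1 :=
          ceil_div_eq n (s - n) hkpos hpos
        rw [Finset.sum_congr rfl (fun i hi => by rw [hKval i hi, hceil]),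
          Finset.sum_const, hKcard, smul_eq_mul]
    rw [hsplit, hJsum, hKsum, nat_sub_arith _ _ _ (le_of_lt hrlt)]
  -- D' side
  have hsum' : ∑ i, Module.finrank ℝ (L' i) = n := finrank_sum_of_internal hpart'.2.2.2.2
  have hA'ge : (s - n)*(n / (s - n))^2 + (n % (s - n))*(2*(n / (s - n))+1)
      ≤ ∑ i, (Module.finrank ℝ (L' i))^2 :=
    sum_sq_min (fun i => Module.finrank ℝ (L' i)) hsum'
  have hNle : ∑ i, (Module.finrank ℝ (L i))^2 ≤ ∑ i, (Module.finrank ℝ (L' i))^2 := by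
    rw [hAeq]; exact hA'ge
  have hle : (∑ i, (Module.finrank ℝ (L i) : ℝ)^2) ≤ ∑ i, (Module.finrank ℝ (L' i) : ℝ)^2 := by
    have := (Nat.cast_le (α := ℝ)).mpr hNle
    push_cast at this
    exact this
  have hApos : (0:ℝ) < ∑ i, (Module.finrank ℝ (L i) : ℝ)^2 := by
    apply Finset.sum_pos
    · intro i _
      have := hpart.1 i
      positivity
    · exact ⟨⟨0, hkpos⟩, Finset.mem_univ _⟩
  calc cm D' ≤ 1 / Real.sqrt (∑ i, (Module.finrank ℝ (L' i) : ℝ)^2) :=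
        cm_upper hn hs1 D' hD' hcard' L' P' hpart' horth'
    _ ≤ 1 / Real.sqrt (∑ i, (Module.finrank ℝ (L i) : ℝ)^2) := by
        apply one_div_le_one_div_of_le (Real.sqrt_pos.mpr hApos)
        exact Real.sqrt_le_sqrt hle
    _ ≤ cm D := cm_lower hn hs1 D L P hpart horth hoptmin
end
end
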